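/- arXiv:2310.14482 — 11 statements merged into one kernel-verified Lean document; each statement's English description precedes it below -/
import Mathlib

section
/- Let G ≥ 0 and D > 0 be real numbers and set γ = G/(D·(D+G)). Then γ·D = G/(D+G) < 1 and γ·G − ω(γ·D) = ω*(G/D), where ω(a) = −a − log(1−a) and ω*(a) = a − log(1+a). -/
/-- `ω(a) = -a - log (1 - a)` (for `a < 1`). -/
noncomputable def omegaFn (a : ℝ) : ℝ := -a - Real.log (1 - a)

/-- `ω*(a) = a - log (1 + a)` (for `a > -1`), the Fenchel conjugate of `ω`. -/
noncomputable def omegaStar (a : ℝ) : ℝ := a - Real.log (1 + a)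

/-- With step size `γ = G/(D(D+G))` one has `γD = G/(D+G) < 1` and the guaranteed
decrease `γG - ω(γD)` equals `ω*(G/D)`. -/
theorem stmt_3 (G D : ℝ) (hG : 0 ≤ G) (hD : 0 < D)
    (γ : ℝ) (hγ : γ = G / (D * (D + G))) :
    γ * D = G / (D + G) ∧ G / (D + G) < 1 ∧
      γ * G - omegaFn (γ * D) = omegaStar (G / D) := by
  have hDG : 0 < D + G := by linarith
  have h1 : γ * D = G / (D + G) := by
    rw [hγ]; field_simp
  refine ⟨h1, ?_, ?_⟩
  · rw [div_lt_one hDG]; linarith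
  · rw [h1, omegaFn, omegaStar]
    have e1 : (1 : ℝ) - G / (D + G) = D / (D + G) := by field_simp; ring
    have e2 : (1 : ℝ) + G / D = (D + G) / D := by field_simp
    rw [e1, e2, Real.log_div hD.ne' hDG.ne', Real.log_div hDG.ne' hD.ne', hγ]
    field_simp
    ring
end

section
/- Let θ ≥ 1 and R ≥ 0 be real numbers, and let G, D be reals with G > θ + R and (G − R)/√θ ≤ D ≤ G + θ + R. Set γ = G/(D·(D+G)). Then D > 1, 0 < γ < 1, and γ·G − ω(γ·D) ≥ 1/10.6, where ω(a) = −a − log(1−a). (This is the per-iteration decrease guarantee of the approximate generalized Frank–Wolfe method in the large-gap case G^a > θ + R_g.) -/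
/-!
With `u = G / D`, the Frank–Wolfe step `γ = G / (D (D + G))` turns the decrease `γ G - ω(γ D)`
into exactly `ω*(u) = u - log (1 + u)`. In the large-gap case `D ≤ G + θ + R < 2 G`, so `u ≥ 1/2`,
and since `ω*` is increasing on `[0, ∞)` the decrease is at least
`ω*(1/2) = 1/2 - log (3/2) ≥ 1/10.6`.
-/

open Real

noncomputable def omegaStarFn (a : ℝ) : ℝ := a - log (1 + a)

theorem sqrt_lt_div_sqrt {θ a : ℝ} (hθ : 0 < θ) (h : θ < a) : √θ < a / √θ := by
  rw [lt_div_iff₀ (sqrt_pos.2 hθ), mul_self_sqrt hθ.le]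
  exact h

theorem mul_sub_omegaFn_eq_omegaStarFn {G D : ℝ} (hD : D ≠ 0) (hDG : D + G ≠ 0) :
    G / (D * (D + G)) * G - omegaFn (G / (D * (D + G)) * D) = omegaStarFn (G / D) := by
  have hstep : G / (D * (D + G)) * G + G / (D * (D + G)) * D = G / D := by
    field_simp
    ring
  have hcompl : 1 - G / (D * (D + G)) * D = (1 + G / D)⁻¹ := by
    field_simp
    ring
  rw [omegaFn, omegaStarFn, hcompl, log_inv, ← hstep]
  ring

theorem omegaStarFn_monotoneOn : MonotoneOn omegaStarFn (Set.Ici 0) := by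
  intro a (ha : 0 ≤ a) b (hb : 0 ≤ b) hab
  have hlog : log ((1 + b) / (1 + a)) ≤ (1 + b) / (1 + a) - 1 :=
    log_le_sub_one_of_pos (by positivity)
  have hratio : (1 + b) / (1 + a) - 1 ≤ b - a := by
    rw [div_sub_one (by positivity), div_le_iff₀ (by positivity)]
    nlinarith
  rw [log_div (by positivity) (by positivity)] at hlog
  simp only [omegaStarFn]
  linarith

theorem log_three_halves_le : log (3 / 2) ≤ 43 / 106 := by
  rw [log_div (by norm_num) (by norm_num)]
  linarith [log_three_lt_d9, log_two_gt_d9]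

theorem one_div_ten_point_six_le_omegaStarFn_half : 1 / 10.6 ≤ omegaStarFn (1 / 2) := by
  rw [omegaStarFn, show (1 : ℝ) + 1 / 2 = 3 / 2 by norm_num]
  linarith [log_three_halves_le]

theorem stmt_4_general (θ R G D : ℝ) (hθ : 1 ≤ θ)
    (hG : θ + R < G) (hD1 : (G - R) / Real.sqrt θ ≤ D) (hD2 : D ≤ G + θ + R)
    (γ : ℝ) (hγ : γ = G / (D * (D + G))) :
    1 < D ∧ 0 < γ ∧ γ < 1 ∧ γ * G - omegaFn (γ * D) ≥ 1 / 10.6 := by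
  have hD : 1 < D := by
    have hsqrt : 1 ≤ √θ := one_le_sqrt.2 hθ
    linarith [sqrt_lt_div_sqrt (by linarith) (by linarith : θ < G - R)]
  have hG0 : 0 < G := by linarith
  have hD0 : 0 < D := by linarith
  have hγ0 : 0 < γ := by rw [hγ]; positivity
  have hγ1 : γ < 1 := by
    rw [hγ, div_lt_one (by positivity)]
    nlinarith
  have hu : 1 / 2 ≤ G / D := by
    rw [le_div_iff₀ hD0]
    linarith
  refine ⟨hD, hγ0, hγ1, ?_⟩
  rw [hγ, mul_sub_omegaFn_eq_omegaStarFn hD0.ne' (by positivity)]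
  exact one_div_ten_point_six_le_omegaStarFn_half.trans
    (omegaStarFn_monotoneOn (by norm_num) (by simp only [Set.mem_Ici]; positivity) hu)

/-- Per-iteration decrease guarantee of the approximate generalized Frank–Wolfe
method in the large-gap case `Gᵃ > θ + R_g`. -/
theorem stmt_4 (θ R G D : ℝ) (hθ : 1 ≤ θ) (hR : 0 ≤ R)
    (hG : θ + R < G) (hD1 : (G - R) / Real.sqrt θ ≤ D) (hD2 : D ≤ G + θ + R)
    (γ : ℝ) (hγ : γ = G / (D * (D + G))) :
    1 < D ∧ 0 < γ ∧ γ < 1 ∧ γ * G - omegaFn (γ * D) ≥ 1 / 10.6 :=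
  stmt_4_general θ R G D hθ hG hD1 hD2 γ hγ
end

section
/- Let θ ≥ 1 and R ≥ 0 be real numbers, and let G, D be reals with 0 ≤ G ≤ θ + R and 0 < D ≤ G + θ + R. Set γ = min{G/(D·(D+G)), 1}. Then γ·D < 1 and γ·G − ω(γ·D) ≥ G²/(12·(θ+R)²), where ω(a) = −a − log(1−a). (This is the per-iteration decrease guarantee of the approximate generalized Frank–Wolfe method in the case G^a ≤ θ + R_g.) -/
lemma log_le_half_sub_inv {x : ℝ} (hx : 1 ≤ x) : Real.log x ≤ (x - x⁻¹) / 2 := by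
  have key : MonotoneOn (fun t : ℝ => (t - t⁻¹) / 2 - Real.log t) (Set.Ici 1) := by
    have hder : ∀ t ∈ interior (Set.Ici (1:ℝ)),
        HasDerivAt (fun t : ℝ => (t - t⁻¹) / 2 - Real.log t)
          ((1 - -(t ^ 2)⁻¹) / 2 - t⁻¹) t := by
      intro t ht
      rw [interior_Ici] at ht
      have ht0 : (0:ℝ) < t := lt_trans one_pos ht
      exact (((hasDerivAt_id t).sub (hasDerivAt_inv ht0.ne')).div_const 2).sub
        (Real.hasDerivAt_log ht0.ne')
    apply monotoneOn_of_deriv_nonneg (convex_Ici 1)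
    · apply ContinuousOn.sub
      · exact ((continuousOn_id.sub (continuousOn_id.inv₀ (fun t ht =>
          (lt_of_lt_of_le one_pos ht).ne'))).div_const 2)
      · exact Real.continuousOn_log.mono (fun t ht => (lt_of_lt_of_le one_pos ht).ne')
    · intro t ht
      exact ((hder t ht).differentiableAt).differentiableWithinAt
    · intro t ht
      rw [(hder t ht).deriv]
      rw [interior_Ici] at ht
      have ht0 : (0:ℝ) < t := lt_trans one_pos ht
      have h : (1 - -(t ^ 2)⁻¹) / 2 - t⁻¹ = (t - 1) ^ 2 / (2 * t ^ 2) := by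
        field_simp; ring
      rw [h]; positivity
  have := key Set.self_mem_Ici (Set.mem_Ici.mpr hx) hx
  simp [Real.log_one] at this
  linarith

/-- Per-iteration decrease guarantee of the approximate generalized Frank–Wolfe
method in the case `Gᵃ ≤ θ + R_g`. -/
theorem stmt_5 (θ R G D : ℝ) (hθ : 1 ≤ θ) (hR : 0 ≤ R)
    (hG0 : 0 ≤ G) (hG : G ≤ θ + R) (hD0 : 0 < D) (hD : D ≤ G + θ + R)
    (γ : ℝ) (hγ : γ = min (G / (D * (D + G))) 1) :
    γ * D < 1 ∧ γ * G - omegaFn (γ * D) ≥ G ^ 2 / (12 * (θ + R) ^ 2) := by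
  have hS1 : (1:ℝ) ≤ θ + R := by linarith
  have hS0 : (0:ℝ) < θ + R := lt_of_lt_of_le one_pos hS1
  have hDG : 0 < D + G := by linarith
  have hDDG : 0 < D * (D + G) := by positivity
  rcases le_or_gt (G / (D * (D + G))) 1 with hcase | hcase
  · -- γ = G / (D * (D + G))
    rw [min_eq_left hcase] at hγ
    have hγD : γ * D = G / (D + G) := by
      rw [hγ]; field_simp
    have hγD1 : γ * D < 1 := by
      rw [hγD, div_lt_one hDG]; linarith
    refine ⟨hγD1, ?_⟩
    have h1sub : 1 - γ * D = D / (D + G) := by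
      rw [hγD]; field_simp; ring
    have hx1 : (1:ℝ) ≤ (D + G) / D := by
      rw [le_div_iff₀ hD0]; linarith
    have hlog := log_le_half_sub_inv hx1
    rw [inv_div] at hlog
    have hlogeq : Real.log (1 - γ * D) = - Real.log ((D + G) / D) := by
      rw [h1sub, ← Real.log_inv, inv_div]
    have hγG : γ * G = G ^ 2 / (D * (D + G)) := by
      rw [hγ]; ring
    have e1 : G ^ 2 / (D * (D + G)) + G / (D + G) - ((D + G) / D - D / (D + G)) / 2
        = G ^ 2 / (2 * (D * (D + G))) := by
      field_simp; ring
    have e2 : G ^ 2 / (12 * (θ + R) ^ 2) ≤ G ^ 2 / (2 * (D * (D + G))) := by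
      apply div_le_div_of_nonneg_left (by positivity) (by positivity)
      nlinarith [sq_nonneg G]
    unfold omegaFn
    rw [hlogeq, hγG, hγD]
    linarith
  · -- γ = 1
    rw [min_eq_right hcase.le] at hγ
    have hlt : D * (D + G) < G := by have := (lt_div_iff₀ hDDG).mp hcase; linarith
    have hGpos : 0 < G := lt_of_le_of_lt (le_of_lt hDDG) hlt
    have hD1 : D < 1 := by nlinarith
    have hu : (0:ℝ) < 1 - D := by linarith
    have hx1 : (1:ℝ) ≤ (1 - D)⁻¹ := by
      rw [le_inv_comm₀] <;> linarith
    have hlog := log_le_half_sub_inv hx1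
    rw [inv_inv] at hlog
    have hlogeq : Real.log (1 - D) = - Real.log (1 - D)⁻¹ := by
      rw [Real.log_inv, neg_neg]
    have hsq : D ^ 2 ≤ G * (1 - D) := by nlinarith
    have e1 : D - ((1 - D)⁻¹ - (1 - D)) / 2 = -(D ^ 2 / (2 * (1 - D))) := by
      field_simp; ring
    have e2 : D ^ 2 / (2 * (1 - D)) ≤ G / 2 := by
      rw [div_le_div_iff₀ (by positivity) two_pos]
      nlinarith
    have e3 : G ^ 2 / (12 * (θ + R) ^ 2) ≤ G / 2 - G / 2 + G / 12 := by
      rw [div_le_iff₀ (by positivity)]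
      have t1 : G * G ≤ G * (θ + R) := mul_le_mul_of_nonneg_left hG hG0
      have t2 : G * (θ + R) ≤ G * ((θ + R) * (θ + R)) := by nlinarith
      nlinarith [t1, t2]
    constructor
    · rw [hγ]; simpa using hD1
    · unfold omegaFn
      rw [hγ, one_mul, one_mul, hlogeq]
      linarith [hlog, e1, e2, e3]
end

section
/- Let D ⊆ ℝⁿ be a nonempty compact convex set, B : ℝⁿ → ℝ^d linear, f : ℝ^d → ℝ convex and differentiable on an open set containing B(D), g : ℝⁿ → ℝ convex on D, F(x) = f(B(x)) + g(x), and F^lin_x(h) = ⟨∇f(B(x)), B(h)⟩ + g(h). Let ε > 0, δ ≥ 0, and let x, h, h★ ∈ D with h★ minimizing F^lin_x over D. If F^lin_x(h) ≤ F^lin_x(h★) + δ (δ-suboptimality), G^a := F^lin_x(x) − F^lin_x(h) ≤ ε, and δ ≤ 3ε/2, then F(x) − inf_{w∈D} F(w) ≤ G^a + δ ≤ 5ε/2. (This is the guarantee at the stopping criterion of the approximate generalized Frank–Wolfe algorithm.) -/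
open scoped RealInnerProductSpace

/-- Gradient inequality for a convex differentiable function on an open convex set. -/
lemma grad_ineq {d : ℕ} {U : Set (EuclideanSpace ℝ (Fin d))}
    {f : EuclideanSpace ℝ (Fin d) → ℝ} (hU : IsOpen U)
    (hfconv : ConvexOn ℝ U f) (hfdiff : DifferentiableOn ℝ f U)
    {p q : EuclideanSpace ℝ (Fin d)} (hp : p ∈ U) (hq : q ∈ U) :
    ⟪gradient f p, q - p⟫ ≤ f q - f p := by
  have hgrad : HasGradientAt f (gradient f p) p :=
    hfdiff.hasGradientAt (hU.mem_nhds hp)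
  have hfd : HasFDerivAt f ((InnerProductSpace.toDual ℝ _) (gradient f p)) p :=
    (hasGradientAt_iff_hasFDerivAt).mp hgrad
  -- the affine line from p to q
  set γ : ℝ →ᵃ[ℝ] EuclideanSpace ℝ (Fin d) := AffineMap.lineMap p q with hγ
  have hγval : ∀ t : ℝ, γ t = p + t • (q - p) := by
    intro t
    simp [hγ, AffineMap.lineMap_apply]
    module
  -- γ has derivative (q - p) everywhere
  have hγderiv : HasDerivAt (fun t : ℝ => γ t) (q - p) 0 := by
    have : HasDerivAt (fun t : ℝ => p + t • (q - p)) (q - p) 0 := by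
      simpa using ((hasDerivAt_id (0 : ℝ)).smul_const (q - p)).const_add p
    simpa [funext hγval] using this
  have hγ0 : γ (0 : ℝ) = p := by rw [hγval]; simp
  have hγ1 : γ (1 : ℝ) = q := by rw [hγval]; simp
  -- composition
  have hcomp : HasDerivAt (fun t : ℝ => f (γ t)) (⟪gradient f p, q - p⟫) 0 := by
    have hfd' : HasFDerivAt f ((InnerProductSpace.toDual ℝ _) (gradient f p)) (γ 0) :=
      hγ0 ▸ hfd
    have := hfd'.comp_hasDerivAt 0 hγderiv
    exact this
  -- convexity of f ∘ γ on Icc 0 1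
  have hsub : Set.Icc (0 : ℝ) 1 ⊆ γ ⁻¹' U := by
    intro t ht
    have : γ t ∈ segment ℝ p q := by
      rw [segment_eq_image_lineMap]
      exact ⟨t, ht, rfl⟩
    exact hfconv.1.segment_subset hp hq this
  have hconv : ConvexOn ℝ (Set.Icc (0 : ℝ) 1) (f ∘ γ) :=
    (hfconv.comp_affineMap γ).subset hsub (convex_Icc 0 1)
  have := hconv.le_slope_of_hasDerivAt (Set.left_mem_Icc.2 zero_le_one)
    (Set.right_mem_Icc.2 zero_le_one) one_pos hcomp
  simpa [slope, hγ0, hγ1] using this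

/-- Guarantee at the stopping criterion of the approximate generalized Frank–Wolfe
algorithm: if the approximate duality gap satisfies `Gᵃ ≤ ε`, the oracle error
satisfies `δ ≤ 3ε/2`, and `h` is `δ`-suboptimal for the linearized problem, then
`F x - inf_{w ∈ D} F w ≤ Gᵃ + δ ≤ 5ε/2`. -/
theorem stmt_6 {n d : ℕ} (D : Set (EuclideanSpace ℝ (Fin n)))
    (hDne : D.Nonempty) (hDcompact : IsCompact D) (hDconvex : Convex ℝ D)
    (B : EuclideanSpace ℝ (Fin n) →ₗ[ℝ] EuclideanSpace ℝ (Fin d))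
    (f : EuclideanSpace ℝ (Fin d) → ℝ) (g : EuclideanSpace ℝ (Fin n) → ℝ)
    (U : Set (EuclideanSpace ℝ (Fin d))) (hU : IsOpen U) (hBD : B '' D ⊆ U)
    (hfconv : ConvexOn ℝ U f) (hfdiff : DifferentiableOn ℝ f U)
    (hgconv : ConvexOn ℝ D g)
    (F : EuclideanSpace ℝ (Fin n) → ℝ)
    (hF : ∀ x, F x = f (B x) + g x)
    (Flin : EuclideanSpace ℝ (Fin n) → EuclideanSpace ℝ (Fin n) → ℝ)
    (hFlin : ∀ x h, Flin x h = ⟪gradient f (B x), B h⟫ + g h)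
    (ε δ : ℝ) (hε : 0 < ε) (hδ : 0 ≤ δ)
    (x h hstar : EuclideanSpace ℝ (Fin n))
    (hx : x ∈ D) (hh : h ∈ D) (hhstar : hstar ∈ D)
    (hlinmin : ∀ w ∈ D, Flin x hstar ≤ Flin x w)
    (hsubopt : Flin x h ≤ Flin x hstar + δ)
    (Ga : ℝ) (hGa : Ga = Flin x x - Flin x h)
    (hGaε : Ga ≤ ε) (hδε : δ ≤ 3 * ε / 2) :
    F x - sInf (F '' D) ≤ Ga + δ ∧ Ga + δ ≤ 5 * ε / 2 := by
  constructor
  · -- key: for every w ∈ D, F x - F w ≤ Ga + δ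
    have key : ∀ w ∈ D, F x - (Ga + δ) ≤ F w := by
      intro w hw
      have hgi : ⟪gradient f (B x), B w - B x⟫ ≤ f (B w) - f (B x) :=
        grad_ineq hU hfconv hfdiff (hBD ⟨x, hx, rfl⟩) (hBD ⟨w, hw, rfl⟩)
      have hinner : (⟪gradient f (B x), B w - B x⟫ : ℝ)
          = ⟪gradient f (B x), B w⟫ - ⟪gradient f (B x), B x⟫ := by
        rw [inner_sub_right]
      -- F x - F w ≤ Flin x x - Flin x w
      have h1 : F x - F w ≤ Flin x x - Flin x w := by
        rw [hF, hF, hFlin, hFlin]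
        nlinarith [hgi, hinner]
      have h2 : Flin x hstar ≤ Flin x w := hlinmin w hw
      have := hGa
      linarith
    have hbdd : BddBelow (F '' D) := by
      refine ⟨F x - (Ga + δ), ?_⟩
      rintro y ⟨w, hw, rfl⟩
      exact key w hw
    have hle : F x - (Ga + δ) ≤ sInf (F '' D) :=
      le_csInf (hDne.image F) (by rintro y ⟨w, hw, rfl⟩; exact key w hw)
    linarith
  · -- Ga + δ ≤ 5ε/2
    linarith
end

section
/- Let β > 0 and let (d_j)_{j≥0} and (g_j)_{j≥0} be nonnegative real sequences satisfying d_{j+1} ≤ d_j − g_j²/β for all j ≥ 0 and g_j ≥ d_j for all j ≥ 0. Then for every j ≥ 1: d_j < β/j; moreover, for integers 0 ≤ l < j: if l < ⌊(j+1)/2⌋ then min{g_l, g_{l+1}, …, g_j} < 2β/j, and if ⌊(j+1)/2⌋ ≤ l < j then min{g_l, …, g_j} < β/√((l+1)·(j−l)). -/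
/-!
The progress inequality together with `d j ≤ g j` gives `d (j+1) ≤ φ (d j)` with
`φ x = x - x²/β`, and `φ` maps `[0, β/n)` into `[0, β/(n+1))`; induction gives `d j · j < β`.
Summing the progress inequality over a window `[a, j]` bounds `∑ g i²` by `β d a < β²/a`,
so some `g i` with `a ≤ i ≤ j` satisfies `g i² < β² / (a (j - a + 1))`. Taking `a = ⌊(j+1)/2⌋`,
resp. `a = l`, turns this into the two window bounds.
-/

theorem sub_sq_div_lt_div_succ {β x : ℝ} (n : ℕ) (hβ : 0 < β) (hx : 0 ≤ x) (hxn : x * n < β) :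
    x - x ^ 2 / β < β / (n + 1) := by
  -- with `s = β - n x > 0`: `β² - (n+1) x β + (n+1) x² = (x - s/2)² + 3 s²/4 + n x s`
  have hs : 0 < β - x * n := sub_pos.2 hxn
  have key : 0 < β ^ 2 - (n + 1) * x * β + (n + 1) * x ^ 2 := by
    nlinarith [sq_nonneg (x - (β - x * n) / 2), pow_pos hs 2,
      mul_nonneg (mul_nonneg hx (Nat.cast_nonneg (α := ℝ) n)) hs.le]
  rw [sub_lt_iff_lt_add, div_add_div _ _ (by positivity) hβ.ne', lt_div_iff₀ (by positivity)]
  nlinarith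

section
variable {β : ℝ} {d g : ℕ → ℝ}

theorem sum_Icc_sq_div_le_sub (hrec : ∀ j, d (j + 1) ≤ d j - g j ^ 2 / β) {a b : ℕ} (hab : a ≤ b) :
    ∑ i ∈ Finset.Icc a b, g i ^ 2 / β ≤ d a - d (b + 1) := by
  calc ∑ i ∈ Finset.Icc a b, g i ^ 2 / β ≤ ∑ i ∈ Finset.Icc a b, -(d (i + 1) - d i) :=
        Finset.sum_le_sum fun i _ => by linarith [hrec i]
    _ = d a - d (b + 1) := by rw [Finset.sum_neg_distrib, Finset.sum_Icc_sub hab]; ring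

theorem mul_lt_of_le_sub_sq_div (hβ : 0 < β) (hd : ∀ j, 0 ≤ d j)
    (hrec : ∀ j, d (j + 1) ≤ d j - g j ^ 2 / β) (hdom : ∀ j, d j ≤ g j) (n : ℕ) :
    d n * n < β := by
  induction n with
  | zero => simpa using hβ
  | succ n ih =>
    have hsq : d n ^ 2 / β ≤ g n ^ 2 / β := by gcongr; exacts [hd n, hdom n]
    have hstep : d (n + 1) < β / (n + 1) :=
      (hrec n).trans_lt (by linarith [sub_sq_div_lt_div_succ n hβ (hd n) ih])
    push_cast
    rwa [← lt_div_iff₀ (by positivity)]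

theorem exists_mem_Icc_lt_div_sqrt (hβ : 0 < β) (hd : ∀ j, 0 ≤ d j)
    (hrec : ∀ j, d (j + 1) ≤ d j - g j ^ 2 / β) (hdom : ∀ j, d j ≤ g j) {a j : ℕ}
    (ha : 1 ≤ a) (haj : a ≤ j) :
    ∃ i ∈ Finset.Icc a j, g i < β / √(a * (j - a + 1 : ℝ)) := by
  have hapos : (0 : ℝ) < a := by exact_mod_cast ha
  have hcard : ((Finset.Icc a j).card : ℝ) = j - a + 1 := by
    rw [Nat.card_Icc, Nat.cast_sub (by omega)]; push_cast; ring
  have hlen : (0 : ℝ) < j - a + 1 := by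
    rw [← hcard]; exact_mod_cast (Finset.nonempty_Icc.2 haj).card_pos
  have hsum : ∑ i ∈ Finset.Icc a j, g i ^ 2 / β < ∑ _i ∈ Finset.Icc a j, β / (a * (j - a + 1)) :=
    calc ∑ i ∈ Finset.Icc a j, g i ^ 2 / β ≤ d a - d (j + 1) := sum_Icc_sq_div_le_sub hrec haj
      _ ≤ d a := sub_le_self _ (hd _)
      _ < β / a := (lt_div_iff₀ hapos).2 (mul_lt_of_le_sub_sq_div hβ hd hrec hdom a)
      _ = ∑ _i ∈ Finset.Icc a j, β / (a * (j - a + 1)) := by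
        rw [Finset.sum_const, nsmul_eq_mul, hcard]; field_simp
  obtain ⟨i, hi, hlt⟩ := Finset.exists_lt_of_sum_lt hsum
  refine ⟨i, hi, lt_of_pow_lt_pow_left₀ 2 (by positivity) ?_⟩
  rw [div_pow, Real.sq_sqrt (by positivity)]
  calc g i ^ 2 = g i ^ 2 / β * β := by field_simp
    _ < β / (a * (j - a + 1)) * β := by gcongr
    _ = β ^ 2 / (a * (j - a + 1)) := by ring

end

theorem sq_le_four_mul_half_mul (j : ℕ) : j ^ 2 ≤ 4 * ((j + 1) / 2) * (j + 1 - (j + 1) / 2) := by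
  rcases Nat.even_or_odd' j with ⟨k, rfl | rfl⟩
  · rw [show (2 * k + 1) / 2 = k by omega, show 2 * k + 1 - k = k + 1 by omega]; nlinarith
  · rw [show (2 * k + 1 + 1) / 2 = k + 1 by omega, show 2 * k + 1 + 1 - (k + 1) = k + 1 by omega]
    nlinarith

theorem div_two_le_sqrt_half_mul (j : ℕ) :
    (j / 2 : ℝ) ≤ √(((j + 1) / 2 : ℕ) * (j - ((j + 1) / 2 : ℕ) + 1 : ℝ)) := by
  have hcast : ((j ^ 2 : ℕ) : ℝ) ≤ ((4 * ((j + 1) / 2) * (j + 1 - (j + 1) / 2) : ℕ) : ℝ) := by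
    exact_mod_cast sq_le_four_mul_half_mul j
  push_cast [Nat.cast_sub (show (j + 1) / 2 ≤ j + 1 by omega)] at hcast
  exact Real.le_sqrt_of_sq_le (by linarith)

theorem stmt_8_general (β : ℝ) (hβ : 0 < β) (d g : ℕ → ℝ)
    (hd : ∀ j, 0 ≤ d j)
    (hrec : ∀ j, d (j + 1) ≤ d j - (g j) ^ 2 / β)
    (hdom : ∀ j, d j ≤ g j) :
    (∀ j : ℕ, 1 ≤ j → d j < β / j) ∧
    (∀ l j : ℕ, (h : l < j) →
      (l < (j + 1) / 2 →
        (Finset.Icc l j).inf' (Finset.nonempty_Icc.mpr h.le) g < 2 * β / j) ∧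
      ((j + 1) / 2 ≤ l →
        (Finset.Icc l j).inf' (Finset.nonempty_Icc.mpr h.le) g <
          β / Real.sqrt (((l : ℝ) + 1) * ((j : ℝ) - l)))) := by
  refine ⟨fun j hj => (lt_div_iff₀ (by positivity)).2 (mul_lt_of_le_sub_sq_div hβ hd hrec hdom j),
    fun l j hlj => ⟨fun hl => ?_, fun hl => ?_⟩⟩
  · obtain ⟨i, hi, hgi⟩ :=
      exists_mem_Icc_lt_div_sqrt hβ hd hrec hdom (a := (j + 1) / 2) (j := j) (by omega) (by omega)
    have hj : (0 : ℝ) < j := by exact_mod_cast (by omega : 0 < j)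
    calc (Finset.Icc l j).inf' _ g ≤ g i :=
          Finset.inf'_le g (Finset.Icc_subset_Icc_left (by omega) hi)
      _ < _ := hgi
      _ ≤ β / (j / 2) :=
          div_le_div_of_nonneg_left hβ.le (by positivity) (div_two_le_sqrt_half_mul j)
      _ = 2 * β / j := by field_simp
  · obtain ⟨i, hi, hgi⟩ :=
      exists_mem_Icc_lt_div_sqrt hβ hd hrec hdom (a := l) (j := j) (by omega) hlj.le
    have hlj' : (l : ℝ) + 1 ≤ j := by exact_mod_cast hlj
    have h2l : (j : ℝ) ≤ 2 * l := by exact_mod_cast (by omega : j ≤ 2 * l)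
    calc (Finset.Icc l j).inf' _ g ≤ g i := Finset.inf'_le g hi
      _ < β / √(l * (j - l + 1 : ℝ)) := hgi
      _ ≤ β / √((l + 1) * (j - l : ℝ)) :=
          div_le_div_of_nonneg_left hβ.le (Real.sqrt_pos.2 (by nlinarith))
            (Real.sqrt_le_sqrt (by nlinarith))

/-- Real-sequence lemma (Proposition 2.4 variant, strict version): if
`d (j+1) ≤ d j - (g j)²/β` and `g j ≥ d j` for nonnegative sequences, then
`d j < β/j` for `j ≥ 1`, and the minimum of `g` over any window `{l, …, j}` obeys
the stated bounds. `⌊(j+1)/2⌋` is natural-number division `(j+1)/2`. -/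
theorem stmt_8 (β : ℝ) (hβ : 0 < β) (d g : ℕ → ℝ)
    (hd : ∀ j, 0 ≤ d j) (hg : ∀ j, 0 ≤ g j)
    (hrec : ∀ j, d (j + 1) ≤ d j - (g j) ^ 2 / β)
    (hdom : ∀ j, d j ≤ g j) :
    (∀ j : ℕ, 1 ≤ j → d j < β / j) ∧
    (∀ l j : ℕ, (h : l < j) →
      (l < (j + 1) / 2 →
        (Finset.Icc l j).inf' (Finset.nonempty_Icc.mpr h.le) g < 2 * β / j) ∧
      ((j + 1) / 2 ≤ l →
        (Finset.Icc l j).inf' (Finset.nonempty_Icc.mpr h.le) g <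
          β / Real.sqrt (((l : ℝ) + 1) * ((j : ℝ) - l)))) :=
  stmt_8_general β hβ d g hd hrec hdom
end

section
/- Let β > 0 and let (d_j)_{j≥0} and (g_j)_{j≥0} be nonnegative real sequences satisfying d_{j+1} ≤ d_j − g_j²/β for all j ≥ 0, g_j ≥ d_j for all j ≥ 0, and additionally d_0 ≤ β. Then for every j ≥ 1: d_j ≤ β/(j+1); moreover, for integers 0 ≤ l < j: if l < ⌊j/2 + 1⌋ then min{g_l, g_{l+1}, …, g_j} ≤ 2β/(j+1), and if ⌊j/2 + 1⌋ ≤ l < j then min{g_l, …, g_j} ≤ β/√((l+2)·(j−l)). -/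
/-!
Since `g j ≥ d j ≥ 0`, the recurrence gives `d (j+1) ≤ d j - d j ^ 2 / β`. The map
`x ↦ x - x² / β` sends `[0, β / (n+1)]` into `[0, β / (n+2)]`, and `d 0 ≤ β` is forced by
`d 1 ≥ 0`, so `d j ≤ β / (j+1)` for every `j`. Telescoping the recurrence over a window
`{a, …, j}` bounds `(j - a + 1) · (min g)²` by `∑ g i ² ≤ β · d a ≤ β² / (a+1)`; the two
bounds follow by taking `a = ⌊j/2⌋` and `a = l`.
-/

open Finset

lemma card_mul_inf'_sq_le_sum_sq {ι : Type*} (s : Finset ι) (hs : s.Nonempty) {g : ι → ℝ}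
    (hg : ∀ i ∈ s, 0 ≤ g i) : s.card * s.inf' hs g ^ 2 ≤ ∑ i ∈ s, g i ^ 2 := by
  rw [← nsmul_eq_mul]
  refine card_nsmul_le_sum _ _ _ fun i hi => ?_
  exact pow_le_pow_left₀ (le_inf' hs g hg) (inf'_le g hi) 2

lemma le_div_of_sq_mul_sq_le_sq {m β c : ℝ} (hβ : 0 ≤ β) (hc : 0 < c)
    (h : m ^ 2 * c ^ 2 ≤ β ^ 2) : m ≤ β / c := by
  rw [le_div_iff₀ hc]
  exact le_of_sq_le_sq (by rwa [mul_pow]) hβ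

lemma add_one_div_two_sq_le (j : ℕ) :
    (((j : ℝ) + 1) / 2) ^ 2 ≤ ((j : ℝ) - (j / 2 : ℕ) + 1) * ((j / 2 : ℕ) + 1) := by
  obtain ⟨a, rfl | rfl⟩ := Nat.even_or_odd' j
  · rw [show 2 * a / 2 = a by omega]; push_cast; nlinarith
  · rw [show (2 * a + 1) / 2 = a by omega]; push_cast; nlinarith

lemma add_two_mul_sub_le {l j : ℕ} (h : j ≤ 2 * l + 1) :
    ((l : ℝ) + 2) * (j - l) ≤ (j - l + 1) * (l + 1) := by
  have : (j : ℝ) ≤ 2 * l + 1 := by exact_mod_cast h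
  nlinarith

section

variable {β : ℝ} {d g : ℕ → ℝ}

lemma sub_sq_div_le_div_add_two {x : ℝ} (n : ℕ) (hβ : 0 < β) (hx : 0 ≤ x)
    (hxn : x ≤ β / (n + 1)) : x - x ^ 2 / β ≤ β / (n + 2) := by
  rw [le_div_iff₀ (by positivity)] at hxn
  have hx' : x ≤ β := by nlinarith
  -- `β² - (n+2)(βx - x²) = (β - (n+1)x)(β - x) + x²`
  have key : (x * β - x ^ 2) * (n + 2) ≤ β * β := by
    nlinarith [mul_nonneg (sub_nonneg.2 hxn) (sub_nonneg.2 hx')]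
  rw [show x - x ^ 2 / β = (x * β - x ^ 2) / β by field_simp,
    div_le_div_iff₀ hβ (by positivity)]
  exact key

lemma le_div_succ_of_le_sub_sq_div (hβ : 0 < β) (hd : ∀ j, 0 ≤ d j)
    (hrec : ∀ j, d (j + 1) ≤ d j - d j ^ 2 / β) (j : ℕ) : d j ≤ β / (j + 1) := by
  induction j with
  | zero =>
    have h : d 0 ^ 2 / β ≤ d 0 := by linarith [hrec 0, hd 1]
    rw [div_le_iff₀ hβ] at h
    have : d 0 ≤ β := by nlinarith [hd 0]
    simpa using this
  | succ j ih =>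
    push_cast
    rw [add_assoc, one_add_one_eq_two]
    exact (hrec j).trans (sub_sq_div_le_div_add_two j hβ (hd j) ih)

lemma succ_le_sub_sq_div_of_le (hβ : 0 < β) (hd : ∀ j, 0 ≤ d j)
    (hrec : ∀ j, d (j + 1) ≤ d j - g j ^ 2 / β) (hdom : ∀ j, d j ≤ g j) (j : ℕ) :
    d (j + 1) ≤ d j - d j ^ 2 / β :=
  (hrec j).trans (by gcongr; exacts [hd j, hdom j])

lemma sum_Icc_div_le_sub (hrec : ∀ j, d (j + 1) ≤ d j - g j ^ 2 / β)
    {a b : ℕ} (hab : a ≤ b) : ∑ i ∈ Icc a b, g i ^ 2 / β ≤ d a - d (b + 1) := by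
  induction b, hab using Nat.le_induction with
  | base =>
    rw [Icc_self, sum_singleton]
    linarith [hrec a]
  | succ b hab ih =>
    rw [sum_Icc_succ_top (by omega)]
    linarith [hrec (b + 1)]

lemma inf'_Icc_sq_mul_le (hβ : 0 < β) (hd : ∀ j, 0 ≤ d j)
    (hrec : ∀ j, d (j + 1) ≤ d j - g j ^ 2 / β) (hdom : ∀ j, d j ≤ g j) {a j : ℕ} (h : a ≤ j) :
    (Icc a j).inf' (nonempty_Icc.mpr h) g ^ 2 * (((j : ℝ) - a + 1) * (a + 1)) ≤ β ^ 2 := by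
  have hcard : ((Icc a j).card : ℝ) = j - a + 1 := by
    rw [Nat.card_Icc, Nat.cast_sub (by omega)]; push_cast; ring
  have hsum : ∑ i ∈ Icc a j, g i ^ 2 ≤ β * d a := by
    have := sum_Icc_div_le_sub hrec h
    rw [← sum_div, div_le_iff₀ hβ] at this
    nlinarith [hd (j + 1)]
  have hda := le_div_succ_of_le_sub_sq_div hβ hd (succ_le_sub_sq_div_of_le hβ hd hrec hdom) a
  rw [le_div_iff₀ (by positivity)] at hda
  have hwin := card_mul_inf'_sq_le_sum_sq (Icc a j) (nonempty_Icc.mpr h)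
    (g := g) fun i _ => (hd i).trans (hdom i)
  rw [hcard] at hwin
  nlinarith

end

theorem stmt_9_general (β : ℝ) (hβ : 0 < β) (d g : ℕ → ℝ)
    (hd : ∀ j, 0 ≤ d j)
    (hrec : ∀ j, d (j + 1) ≤ d j - (g j) ^ 2 / β)
    (hdom : ∀ j, d j ≤ g j) :
    (∀ j : ℕ, 1 ≤ j → d j ≤ β / (j + 1)) ∧
    (∀ l j : ℕ, (h : l < j) →
      (l < j / 2 + 1 →
        (Finset.Icc l j).inf' (Finset.nonempty_Icc.mpr h.le) g ≤ 2 * β / (j + 1)) ∧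
      (j / 2 + 1 ≤ l →
        (Finset.Icc l j).inf' (Finset.nonempty_Icc.mpr h.le) g ≤
          β / Real.sqrt (((l : ℝ) + 2) * ((j : ℝ) - l)))) := by
  have decay := le_div_succ_of_le_sub_sq_div hβ hd (succ_le_sub_sq_div_of_le hβ hd hrec hdom)
  have window {a j : ℕ} (h : a ≤ j) := inf'_Icc_sq_mul_le hβ hd hrec hdom h
  refine ⟨fun j _ => decay j, fun l j hlj => ⟨fun hl => ?_, fun hl => ?_⟩⟩
  · have hhalf : j / 2 ≤ j := Nat.div_le_self j 2
    calc (Icc l j).inf' _ g ≤ (Icc (j / 2) j).inf' (nonempty_Icc.mpr hhalf) g :=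
          inf'_mono g (Icc_subset_Icc_left (by omega)) _
      _ ≤ β / (((j : ℝ) + 1) / 2) := le_div_of_sq_mul_sq_le_sq hβ.le (by positivity)
          ((mul_le_mul_of_nonneg_left (add_one_div_two_sq_le j) (sq_nonneg _)).trans
            (window hhalf))
      _ = 2 * β / (j + 1) := by field_simp
  · have hX : 0 < ((l : ℝ) + 2) * ((j : ℝ) - l) :=
      mul_pos (by positivity) (sub_pos.2 (by exact_mod_cast hlj))
    refine le_div_of_sq_mul_sq_le_sq hβ.le (Real.sqrt_pos.2 hX) ?_
    rw [Real.sq_sqrt hX.le]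
    exact (mul_le_mul_of_nonneg_left (add_two_mul_sub_le (by omega)) (sq_nonneg _)).trans
      (window hlj.le)

/-- Real-sequence lemma (Proposition 2.4 variant, non-strict version with
`d 0 ≤ β`): if `d (j+1) ≤ d j - (g j)²/β`, `g j ≥ d j` and `d 0 ≤ β`, then
`d j ≤ β/(j+1)` for `j ≥ 1`, and the minimum of `g` over any window `{l, …, j}`
obeys the stated bounds. `⌊j/2 + 1⌋` is natural-number division `j/2 + 1`. -/
theorem stmt_9 (β : ℝ) (hβ : 0 < β) (d g : ℕ → ℝ)
    (hd : ∀ j, 0 ≤ d j) (hg : ∀ j, 0 ≤ g j)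
    (hrec : ∀ j, d (j + 1) ≤ d j - (g j) ^ 2 / β)
    (hdom : ∀ j, d j ≤ g j)
    (hd0 : d 0 ≤ β) :
    (∀ j : ℕ, 1 ≤ j → d j ≤ β / (j + 1)) ∧
    (∀ l j : ℕ, (h : l < j) →
      (l < j / 2 + 1 →
        (Finset.Icc l j).inf' (Finset.nonempty_Icc.mpr h.le) g ≤ 2 * β / (j + 1)) ∧
      (j / 2 + 1 ≤ l →
        (Finset.Icc l j).inf' (Finset.nonempty_Icc.mpr h.le) g ≤
          β / Real.sqrt (((l : ℝ) + 2) * ((j : ℝ) - l)))) :=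
  stmt_9_general β hβ d g hd hrec hdom
end

section
/- Let C ≥ 0, and let θ, R be reals with θ + R ≥ 1. Let (a_j)_{j≥1} and (b_j)_{j≥1} be nonnegative real sequences satisfying, for all j ≥ 1: a_{j+1} ≤ a_j − b_j²/(12·(θ+R)²), b_j ≥ a_j/(2C+1), and b_j ≤ θ + R. Then: (i) for every j ≥ 1, a_{j+1} ≤ 12·(2C+1)²·(θ+R)²/(j+1); (ii) if 0 ≤ l < ⌊j/2 + 1⌋ then min_{k ∈ {l+1,…,j+1}} b_k ≤ 24·(2C+1)·(θ+R)²/(j+1); (iii) if l ≥ ⌊j/2 + 1⌋ and l < j then min_{k ∈ {l+1,…,j+1}} b_k ≤ 12·(2C+1)·(θ+R)²/√((l+2)·(j−l)). -/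
private lemma aux_rate (c : ℝ) (hc : 0 < c) (a : ℕ → ℝ)
    (ha0 : ∀ j : ℕ, 1 ≤ j → 0 ≤ a j)
    (hrec : ∀ j : ℕ, 1 ≤ j → a (j + 1) ≤ a j - (a j) ^ 2 / c) :
    ∀ j : ℕ, 1 ≤ j → a (j + 1) ≤ c / ((j : ℝ) + 1) := by
  intro j hj
  induction j, hj using Nat.le_induction with
  | base =>
    have h1 := hrec 1 le_rfl
    have h2 := ha0 1 le_rfl
    have ht : (a 1) ^ 2 / c * c = (a 1) ^ 2 := div_mul_cancel₀ _ (ne_of_gt hc)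
    have : a 2 ≤ c / 2 := by
      nlinarith [sq_nonneg (c - a 1), sq_nonneg (a 1)]
    norm_num
    exact this
  | succ n hn ih =>
    have h1 := hrec (n + 1) (by omega)
    have hx : 0 ≤ a (n + 1) := ha0 (n + 1) (by omega)
    have hub : a (n + 1) * ((n : ℝ) + 1) ≤ c := by
      have := ih
      rw [le_div_iff₀ (by positivity)] at this
      linarith
    have ht : (a (n + 1)) ^ 2 / c * c = (a (n + 1)) ^ 2 :=
      div_mul_cancel₀ _ (ne_of_gt hc)
    have hn0 : (0 : ℝ) ≤ (n : ℝ) := Nat.cast_nonneg n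
    have key : (a (n + 1) - (a (n + 1)) ^ 2 / c) * ((n : ℝ) + 2) * c ≤ c * c := by
      nlinarith [sq_nonneg (c - a (n + 1) * ((n : ℝ) + 1)),
        mul_nonneg (mul_nonneg hn0 hx) (by linarith : (0:ℝ) ≤ c - a (n + 1) * ((n : ℝ) + 1)),
        sq_nonneg (a (n + 1))]
    have h2 : (a (n + 1) - (a (n + 1)) ^ 2 / c) * ((n : ℝ) + 2) ≤ c :=
      le_of_mul_le_mul_right (by linarith) hc
    have : a (n + 1 + 1) ≤ c / ((n : ℝ) + 2) := by
      rw [le_div_iff₀ (by positivity)]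
      nlinarith
    push_cast
    convert this using 2
    ring

private lemma aux_tel (M : ℝ) (a b : ℕ → ℝ)
    (h : ∀ j : ℕ, 1 ≤ j → (b j) ^ 2 ≤ M * a j - M * a (j + 1)) :
    ∀ l : ℕ, 1 ≤ l → ∀ m : ℕ,
      (∑ k ∈ Finset.Icc l (l + m), (b k) ^ 2) ≤ M * a l - M * a (l + m + 1) := by
  intro l hl m
  induction m with
  | zero => simpa using h l hl
  | succ m ih =>
    have h2 := h (l + m + 1) (by omega)
    rw [show l + (m + 1) = (l + m) + 1 from rfl,
      Finset.sum_Icc_succ_top (by omega)]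
    have : l + m + 1 + 1 = l + m + 2 := rfl
    linarith

set_option maxHeartbeats 1000000 in
/-- Bounds along the `s`-subsequence of the approximate generalized Frank–Wolfe
iterations: `a j` are optimality gaps, `b j` approximate duality gaps (for `j ≥ 1`).
`⌊j/2 + 1⌋` is natural-number division `j/2 + 1`. -/
theorem stmt_10 (C θ R : ℝ) (hC : 0 ≤ C) (hθR : 1 ≤ θ + R)
    (a b : ℕ → ℝ)
    (ha0 : ∀ j : ℕ, 1 ≤ j → 0 ≤ a j) (hb0 : ∀ j : ℕ, 1 ≤ j → 0 ≤ b j)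
    (hrec : ∀ j : ℕ, 1 ≤ j → a (j + 1) ≤ a j - (b j) ^ 2 / (12 * (θ + R) ^ 2))
    (hdom : ∀ j : ℕ, 1 ≤ j → a j / (2 * C + 1) ≤ b j)
    (hbub : ∀ j : ℕ, 1 ≤ j → b j ≤ θ + R) :
    (∀ j : ℕ, 1 ≤ j →
      a (j + 1) ≤ 12 * (2 * C + 1) ^ 2 * (θ + R) ^ 2 / (j + 1)) ∧
    (∀ j l : ℕ, (h : l < j / 2 + 1) →
      (Finset.Icc (l + 1) (j + 1)).inf' (Finset.nonempty_Icc.mpr (by omega)) b ≤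
        24 * (2 * C + 1) * (θ + R) ^ 2 / (j + 1)) ∧
    (∀ j l : ℕ, j / 2 + 1 ≤ l → (h : l < j) →
      (Finset.Icc (l + 1) (j + 1)).inf' (Finset.nonempty_Icc.mpr (by omega)) b ≤
        12 * (2 * C + 1) * (θ + R) ^ 2 / Real.sqrt (((l : ℝ) + 2) * ((j : ℝ) - l))) := by
  have hK : (1 : ℝ) ≤ 2 * C + 1 := by linarith
  have hK0 : (0 : ℝ) < 2 * C + 1 := by linarith
  have hM : (0 : ℝ) < 12 * (θ + R) ^ 2 := by positivity
  -- step inequality with a only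
  have hstep : ∀ j : ℕ, 1 ≤ j →
      a (j + 1) ≤ a j - (a j) ^ 2 / (12 * (θ + R) ^ 2 * (2 * C + 1) ^ 2) := by
    intro j hj
    have h1 := hrec j hj
    have h2 : (a j / (2 * C + 1)) ^ 2 ≤ (b j) ^ 2 :=
      pow_le_pow_left₀ (div_nonneg (ha0 j hj) hK0.le) (hdom j hj) 2
    have h3 : (a j) ^ 2 / (12 * (θ + R) ^ 2 * (2 * C + 1) ^ 2) ≤
        (b j) ^ 2 / (12 * (θ + R) ^ 2) := by
      rw [div_le_div_iff₀ (by positivity) hM]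
      rw [div_pow] at h2
      rw [div_le_iff₀ (by positivity)] at h2
      nlinarith [mul_le_mul_of_nonneg_right h2 hM.le]
    linarith
  have hrate := aux_rate (12 * (θ + R) ^ 2 * (2 * C + 1) ^ 2) (by positivity) a ha0 hstep
  -- part (i)
  have part1 : ∀ j : ℕ, 1 ≤ j →
      a (j + 1) ≤ 12 * (2 * C + 1) ^ 2 * (θ + R) ^ 2 / (j + 1) := by
    intro j hj
    calc a (j + 1) ≤ 12 * (θ + R) ^ 2 * (2 * C + 1) ^ 2 / ((j : ℝ) + 1) := hrate j hj
      _ = 12 * (2 * C + 1) ^ 2 * (θ + R) ^ 2 / ((j : ℝ) + 1) := by ring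
  -- telescoping
  have hb2 : ∀ j : ℕ, 1 ≤ j →
      (b j) ^ 2 ≤ 12 * (θ + R) ^ 2 * a j - 12 * (θ + R) ^ 2 * a (j + 1) := by
    intro j hj
    have h1 := hrec j hj
    have h2 : (b j) ^ 2 ≤ (a j - a (j + 1)) * (12 * (θ + R) ^ 2) :=
      (div_le_iff₀ hM).mp (by linarith)
    nlinarith [h2]
  have tel := aux_tel (12 * (θ + R) ^ 2) a b hb2
  -- key min bound
  have key : ∀ l j : ℕ, 1 ≤ l → l ≤ j → ∀ hne : (Finset.Icc (l + 1) (j + 1)).Nonempty,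
      (Finset.Icc (l + 1) (j + 1)).inf' hne b ≤
        12 * (2 * C + 1) * (θ + R) ^ 2 /
          Real.sqrt (((l : ℝ) + 1) * ((j : ℝ) + 1 - (l : ℝ))) := by
    intro l j hl hlj hne
    set s := (Finset.Icc (l + 1) (j + 1)).inf' hne b with hs
    have hs0 : 0 ≤ s := Finset.le_inf' hne b (fun k hk => hb0 k (by
      have := (Finset.mem_Icc.mp hk).1; omega))
    have hljR : (l : ℝ) ≤ (j : ℝ) := Nat.cast_le.mpr hlj
    have hlR : (1 : ℝ) ≤ (l : ℝ) := by exact_mod_cast hl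
    have hX : (0 : ℝ) < ((l : ℝ) + 1) * ((j : ℝ) + 1 - (l : ℝ)) := by nlinarith
    have hcard : ((Finset.Icc (l + 1) (j + 1)).card : ℝ) = (j : ℝ) + 1 - (l : ℝ) := by
      rw [Nat.card_Icc]
      have : j + 1 + 1 - (l + 1) = j - l + 1 := by omega
      rw [this]
      push_cast [Nat.cast_sub hlj]
      ring
    have hsum1 : ((Finset.Icc (l + 1) (j + 1)).card : ℝ) * s ^ 2 ≤
        ∑ k ∈ Finset.Icc (l + 1) (j + 1), (b k) ^ 2 := by
      rw [← nsmul_eq_mul, ← Finset.sum_const]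
      apply Finset.sum_le_sum
      intro k hk
      exact pow_le_pow_left₀ hs0 (Finset.inf'_le b hk) 2
    have hsum2 : ∑ k ∈ Finset.Icc (l + 1) (j + 1), (b k) ^ 2 ≤
        12 * (θ + R) ^ 2 * a (l + 1) := by
      have h := tel (l + 1) (by omega) (j - l)
      rw [show l + 1 + (j - l) = j + 1 by omega] at h
      have h2 := ha0 (j + 1 + 1) (by omega)
      nlinarith [mul_nonneg hM.le h2]
    have hal : a (l + 1) ≤ 12 * (θ + R) ^ 2 * (2 * C + 1) ^ 2 / ((l : ℝ) + 1) :=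
      hrate l hl
    have h5 : ((j : ℝ) + 1 - (l : ℝ)) * s ^ 2 ≤
        12 * (θ + R) ^ 2 * (12 * (θ + R) ^ 2 * (2 * C + 1) ^ 2 / ((l : ℝ) + 1)) := by
      rw [← hcard]
      calc ((Finset.Icc (l + 1) (j + 1)).card : ℝ) * s ^ 2 ≤ _ := hsum1
        _ ≤ 12 * (θ + R) ^ 2 * a (l + 1) := hsum2
        _ ≤ _ := by nlinarith [hal]
    have h6 : s ^ 2 * (((l : ℝ) + 1) * ((j : ℝ) + 1 - (l : ℝ))) ≤
        (12 * (2 * C + 1) * (θ + R) ^ 2) ^ 2 := by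
      have h7 := mul_le_mul_of_nonneg_right h5 (show (0:ℝ) ≤ (l : ℝ) + 1 by positivity)
      calc s ^ 2 * (((l : ℝ) + 1) * ((j : ℝ) + 1 - (l : ℝ)))
          = (((j : ℝ) + 1 - (l : ℝ)) * s ^ 2) * ((l : ℝ) + 1) := by ring
        _ ≤ 12 * (θ + R) ^ 2 * (12 * (θ + R) ^ 2 * (2 * C + 1) ^ 2 / ((l : ℝ) + 1)) *
            ((l : ℝ) + 1) := h7
        _ = (12 * (2 * C + 1) * (θ + R) ^ 2) ^ 2 := by
            field_simp
    have hD : (0 : ℝ) ≤ 12 * (2 * C + 1) * (θ + R) ^ 2 := by positivity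
    calc s = Real.sqrt (s ^ 2) := (Real.sqrt_sq hs0).symm
      _ ≤ Real.sqrt ((12 * (2 * C + 1) * (θ + R) ^ 2) ^ 2 /
            (((l : ℝ) + 1) * ((j : ℝ) + 1 - (l : ℝ)))) := by
          apply Real.sqrt_le_sqrt
          rw [le_div_iff₀ hX]
          exact h6
      _ = 12 * (2 * C + 1) * (θ + R) ^ 2 /
            Real.sqrt (((l : ℝ) + 1) * ((j : ℝ) + 1 - (l : ℝ))) := by
          rw [Real.sqrt_div (sq_nonneg _), Real.sqrt_sq hD]
  refine ⟨part1, ?_, ?_⟩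
  · -- part (ii)
    intro j l h
    by_cases hj2 : 2 ≤ j
    · have hne2 : (Finset.Icc (j / 2 + 1) (j + 1)).Nonempty :=
        Finset.nonempty_Icc.mpr (by omega)
      have hsub : Finset.Icc (j / 2 + 1) (j + 1) ⊆ Finset.Icc (l + 1) (j + 1) :=
        Finset.Icc_subset_Icc (by omega) le_rfl
      have h1 := Finset.inf'_mono b hsub hne2
      have h2 := key (j / 2) j (by omega) (by omega) hne2
      have ht1 : (j : ℝ) - 1 ≤ 2 * ((j / 2 : ℕ) : ℝ) := by
        have hn : j ≤ 2 * (j / 2) + 1 := by omega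
        have := (Nat.cast_le (α := ℝ)).mpr hn
        push_cast at this
        linarith
      have ht2 : 2 * ((j / 2 : ℕ) : ℝ) ≤ (j : ℝ) := by
        have hn : 2 * (j / 2) ≤ j := by omega
        have := (Nat.cast_le (α := ℝ)).mpr hn
        push_cast at this
        linarith
      set t : ℝ := ((j / 2 : ℕ) : ℝ) with htdef
      have hX' : (0 : ℝ) < (t + 1) * ((j : ℝ) + 1 - t) := by nlinarith
      have hq : ((j : ℝ) + 1) / 2 ≤ Real.sqrt ((t + 1) * ((j : ℝ) + 1 - t)) := by
        rw [Real.le_sqrt (by positivity) hX'.le]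
        nlinarith [mul_nonneg (by linarith : (0:ℝ) ≤ 2 * t - (j : ℝ) + 1)
          (by linarith : (0:ℝ) ≤ (j : ℝ) - 2 * t)]
      have hD : (0 : ℝ) ≤ 12 * (2 * C + 1) * (θ + R) ^ 2 := by positivity
      have h3 : 12 * (2 * C + 1) * (θ + R) ^ 2 / Real.sqrt ((t + 1) * ((j : ℝ) + 1 - t)) ≤
          12 * (2 * C + 1) * (θ + R) ^ 2 / (((j : ℝ) + 1) / 2) :=
        div_le_div_of_nonneg_left hD (by positivity) hq
      have h4 : 12 * (2 * C + 1) * (θ + R) ^ 2 / (((j : ℝ) + 1) / 2) =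
          24 * (2 * C + 1) * (θ + R) ^ 2 / ((j : ℝ) + 1) := by
        rw [div_div_eq_mul_div]
        ring
      calc (Finset.Icc (l + 1) (j + 1)).inf' _ b
          ≤ (Finset.Icc (j / 2 + 1) (j + 1)).inf' hne2 b := h1
        _ ≤ 12 * (2 * C + 1) * (θ + R) ^ 2 /
              Real.sqrt ((t + 1) * ((j : ℝ) + 1 - t)) := h2
        _ ≤ 12 * (2 * C + 1) * (θ + R) ^ 2 / (((j : ℝ) + 1) / 2) := h3
        _ = 24 * (2 * C + 1) * (θ + R) ^ 2 / ((j : ℝ) + 1) := h4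
    · -- j = 0 or j = 1, and l = 0
      have hl0 : l = 0 := by omega
      subst hl0
      have hmem : 1 ∈ Finset.Icc (0 + 1) (j + 1) := Finset.mem_Icc.mpr (by omega)
      have h1 : (Finset.Icc (0 + 1) (j + 1)).inf' (Finset.nonempty_Icc.mpr (by omega)) b ≤ b 1 :=
        Finset.inf'_le b hmem
      have h2 := hbub 1 le_rfl
      have hjR : (j : ℝ) ≤ 1 := by
        have hn : j ≤ 1 := by omega
        exact_mod_cast (Nat.cast_le (α := ℝ)).mpr hn
      have hjR0 : (0 : ℝ) ≤ (j : ℝ) := Nat.cast_nonneg j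
      calc (Finset.Icc (0 + 1) (j + 1)).inf' _ b ≤ b 1 := h1
        _ ≤ θ + R := h2
        _ ≤ 24 * (2 * C + 1) * (θ + R) ^ 2 / ((j : ℝ) + 1) := by
            rw [le_div_iff₀ (by positivity)]
            nlinarith
  · -- part (iii)
    intro j l hl2 hlj
    have hne : (Finset.Icc (l + 1) (j + 1)).Nonempty := Finset.nonempty_Icc.mpr (by omega)
    have h2 := key l j (by omega) hlj.le hne
    have h2l : j + 1 ≤ 2 * l := by omega
    have hcast : (j : ℝ) + 1 ≤ 2 * (l : ℝ) := by
      have := (Nat.cast_le (α := ℝ)).mpr h2l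
      push_cast at this
      linarith
    have hljR : (l : ℝ) + 1 ≤ (j : ℝ) := by
      have := (Nat.cast_le (α := ℝ)).mpr (Nat.succ_le_of_lt hlj)
      push_cast at this
      linarith
    have hX2 : (0 : ℝ) < ((l : ℝ) + 2) * ((j : ℝ) - (l : ℝ)) :=
      mul_pos (by positivity) (by linarith)
    have hle : ((l : ℝ) + 2) * ((j : ℝ) - (l : ℝ)) ≤
        ((l : ℝ) + 1) * ((j : ℝ) + 1 - (l : ℝ)) := by nlinarith [hcast]
    have hD : (0 : ℝ) ≤ 12 * (2 * C + 1) * (θ + R) ^ 2 := by positivity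
    calc (Finset.Icc (l + 1) (j + 1)).inf' _ b
        ≤ 12 * (2 * C + 1) * (θ + R) ^ 2 /
            Real.sqrt (((l : ℝ) + 1) * ((j : ℝ) + 1 - (l : ℝ))) := h2
      _ ≤ 12 * (2 * C + 1) * (θ + R) ^ 2 /
            Real.sqrt (((l : ℝ) + 2) * ((j : ℝ) - (l : ℝ))) :=
          div_le_div_of_nonneg_left hD (Real.sqrt_pos.mpr hX2) (Real.sqrt_le_sqrt hle)
end

section
/- Let θ, R be reals with θ ≥ 1 and R ≥ 0, and let 0 < ε ≤ θ + R. Let Δ, G, δ : ℕ → ℝ be sequences with Δ_t ≥ 0, G_t ≥ 0, δ_t ≥ 0 for all t, such that for every t: (i) if G_t > θ + R then Δ_{t+1} ≤ Δ_t − 1/10.6; (ii) if G_t ≤ θ + R then Δ_{t+1} ≤ Δ_t − G_t²/(12·(θ+R)²) and Δ_t ≤ G_t + δ_t. Suppose K_q is a positive integer such that δ_t ≤ ε/2 for all t ≥ K_q, and set K_r = ⌊10.6·Δ_0⌋ and K_s = ⌈48·(θ+R)²/ε⌉. Then there exists K ≤ K_r + 2·K_s + 2·K_q such that Δ_K ≤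 ε, G_K ≤ ε, and δ_K ≤ ε. -/
/-- Piecewise potential used in the convergence proof. -/
noncomputable def auxP (c ε x : ℝ) : ℝ := if ε ≤ x then 2*c/ε - c/x else c*x/ε^2

lemma auxP_mono (c ε x y : ℝ) (hc : 0 < c) (hε : 0 < ε) (hy : 0 ≤ y) (hyx : y ≤ x) :
    auxP c ε y ≤ auxP c ε x := by
  unfold auxP
  split_ifs with h1 h2 h2
  · have hy0 : 0 < y := lt_of_lt_of_le hε h1
    have hx0 : 0 < x := lt_of_lt_of_le hy0 hyx
    have : c / x ≤ c / y := by
      rw [div_le_div_iff₀ hx0 hy0]; nlinarith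
    linarith
  · exact absurd (le_trans h1 hyx) h2
  · have hx0 : 0 < x := lt_of_lt_of_le hε h2
    have h3 : c*y/ε^2 ≤ c/ε := by
      rw [div_le_div_iff₀ (by positivity) hε]
      nlinarith [mul_lt_mul_of_pos_left (not_le.1 h1) (mul_pos hc hε)]
    have h4 : c/x ≤ c/ε := by
      rw [div_le_div_iff₀ hx0 hε]; nlinarith
    have hsplit : 2*c/ε = c/ε + c/ε := by ring
    linarith
  · gcongr

lemma auxP_nonneg (c ε x : ℝ) (hc : 0 < c) (hε : 0 < ε) (hx : 0 ≤ x) :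
    0 ≤ auxP c ε x := by
  unfold auxP
  split_ifs with h1
  · have hx0 : 0 < x := lt_of_lt_of_le hε h1
    have h4 : c/x ≤ c/ε := by
      rw [div_le_div_iff₀ hx0 hε]; nlinarith
    have : 0 < c/ε := by positivity
    have hsplit : 2*c/ε = c/ε + c/ε := by ring
    linarith
  · positivity

lemma auxP_lt (c ε x : ℝ) (hc : 0 < c) (hε : 0 < ε) (hx : 0 ≤ x) :
    auxP c ε x < 2*c/ε := by
  unfold auxP
  split_ifs with h1
  · have hx0 : 0 < x := lt_of_lt_of_le hε h1
    have : 0 < c/x := by positivity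
    have hsplit : 2*c/ε = c/ε + c/ε := by ring
    linarith
  · have h3 : c*x/ε^2 < c/ε := by
      rw [div_lt_div_iff₀ (by positivity) hε]
      nlinarith [mul_lt_mul_of_pos_left (not_le.1 h1) (mul_pos hc hε)]
    have : 0 < c/ε := by positivity
    have hsplit : 2*c/ε = c/ε + c/ε := by ring
    linarith

lemma auxP_drop (c ε x y : ℝ) (hc : 0 < c) (hε : 0 < ε) (hy : 0 ≤ y)
    (h1 : ε^2/c ≤ x - y) (h2 : ε ≤ x → x^2/c ≤ x - y) :
    auxP c ε y ≤ auxP c ε x - 1 := by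
  have hε2c : 0 < ε^2/c := by positivity
  unfold auxP
  rcases le_or_gt ε x with hx | hx
  · have hx0 : 0 < x := lt_of_lt_of_le hε hx
    have hd : x^2/c ≤ x - y := h2 hx
    have hdc : x^2 ≤ c*(x - y) := by
      rw [div_le_iff₀ hc] at hd; linarith
    rw [if_pos hx]
    rcases le_or_gt ε y with hy' | hy'
    · rw [if_pos hy']
      have hy0 : 0 < y := lt_of_lt_of_le hε hy'
      have hyx : y ≤ x := by nlinarith [sq_nonneg x]
      have key2 : c/x + 1 ≤ c/y := by
        rw [div_add' _ _ _ (ne_of_gt hx0), div_le_div_iff₀ hx0 hy0]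
        nlinarith
      linarith
    · rw [if_neg (not_le.2 hy')]
      have e1 : c*(x-ε)/x^2 ≤ c/ε - c/x := by
        rw [div_sub_div _ _ (ne_of_gt hε) (ne_of_gt hx0),
          div_le_div_iff₀ (by positivity) (by positivity)]
        nlinarith [mul_nonneg (mul_nonneg hc.le hx0.le) (sq_nonneg (x - ε))]
      have e2 : c*(ε-y)/x^2 ≤ c/ε - c*y/ε^2 := by
        have : c/ε - c*y/ε^2 = c*(ε-y)/ε^2 := by field_simp
        rw [this, div_le_div_iff₀ (by positivity) (by positivity)]
        nlinarith [mul_nonneg (mul_nonneg hc.le (by linarith : (0:ℝ) ≤ ε - y))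
          (mul_nonneg (by linarith : (0:ℝ) ≤ x - ε) (by linarith : (0:ℝ) ≤ x + ε))]
      have e3 : (1:ℝ) ≤ c*(x-ε)/x^2 + c*(ε-y)/x^2 := by
        rw [← add_div, le_div_iff₀ (by positivity)]
        nlinarith
      have hsplit : 2*c/ε = c/ε + c/ε := by ring
      linarith
  · have hyx : y < x := by linarith [h1]
    rw [if_neg (not_le.2 hx), if_neg (not_le.2 (lt_trans hyx hx))]
    have hnum : c*y ≤ c*x - ε^2 := by
      rw [div_le_iff₀ hc] at h1; nlinarith
    have h5 : c*y/ε^2 ≤ (c*x - ε^2)/ε^2 := by gcongr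
    have h6 : (c*x - ε^2)/ε^2 = c*x/ε^2 - 1 := by
      rw [sub_div, div_self (by positivity : (0:ℝ) < ε^2).ne']
    linarith [h5, h6.le, h6.ge]

set_option maxHeartbeats 1600000 in
/-- Convergence of the approximate generalized Frank–Wolfe algorithm with the
scheduled strategy for the oracle accuracies `δ_t`, stated abstractly for real
sequences. -/
theorem stmt_11 (θ R ε : ℝ) (hθ : 1 ≤ θ) (hR : 0 ≤ R)
    (hε0 : 0 < ε) (hε : ε ≤ θ + R)
    (Δ G δ : ℕ → ℝ)
    (hΔ : ∀ t, 0 ≤ Δ t) (hG : ∀ t, 0 ≤ G t) (hδ : ∀ t, 0 ≤ δ t)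
    (hlarge : ∀ t, θ + R < G t → Δ (t + 1) ≤ Δ t - 1 / 10.6)
    (hsmall : ∀ t, G t ≤ θ + R →
      Δ (t + 1) ≤ Δ t - (G t) ^ 2 / (12 * (θ + R) ^ 2) ∧ Δ t ≤ G t + δ t)
    (Kq : ℕ) (hKq : 0 < Kq) (hsched : ∀ t, Kq ≤ t → δ t ≤ ε / 2)
    (Kr Ks : ℕ) (hKr : Kr = ⌊(10.6 : ℝ) * Δ 0⌋₊)
    (hKs : Ks = ⌈48 * (θ + R) ^ 2 / ε⌉₊) :
    ∃ K ≤ Kr + 2 * Ks + 2 * Kq, Δ K ≤ ε ∧ G K ≤ ε ∧ δ K ≤ ε := by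
  by_contra hcon
  push_neg at hcon
  set N := Kr + 2 * Ks + 2 * Kq with hN
  have hθR0 : (0:ℝ) < θ + R := by linarith
  set c : ℝ := 48 * (θ + R)^2 with hc_def
  have hc : 0 < c := by positivity
  -- on the window, G stays above ε/2
  have key : ∀ K, Kq ≤ K → K ≤ N → ε/2 < G K := by
    intro K h1 h2
    by_contra hG'
    push_neg at hG'
    have hδK : δ K ≤ ε/2 := hsched K h1
    have hGθ : G K ≤ θ + R := by linarith
    have hΔK : Δ K ≤ ε := by linarith [(hsmall K hGθ).2]
    have := hcon K h2 hΔK (by linarith) 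
    linarith
  -- Δ is nonincreasing
  have mono : ∀ t, Δ (t+1) ≤ Δ t := by
    intro t
    rcases le_or_gt (G t) (θ + R) with h | h
    · have := (hsmall t h).1
      have hpos : 0 ≤ (G t)^2 / (12 * (θ + R)^2) := by positivity
      linarith
    · have := hlarge t h
      norm_num at this ⊢
      linarith
  have hanti : Antitone Δ := antitone_nat_of_succ_le mono
  -- the potential
  set Φ : ℕ → ℝ := fun t => auxP c ε (Δ t) + 10.6 * Δ t with hΦ
  have step : ∀ t, Kq ≤ t → t < N → Φ (t+1) ≤ Φ t - 1 := by
    intro t ht htN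
    have hGhalf : ε/2 < G t := key t ht (le_of_lt htN)
    rcases le_or_gt (G t) (θ + R) with h | h
    · -- small-gap step
      obtain ⟨hdec, hgap⟩ := hsmall t h
      have hδt : δ t ≤ ε/2 := hsched t ht
      have hG1 : Δ t - ε/2 ≤ G t := by linarith
      have hdrop : (G t)^2 / (12 * (θ + R)^2) ≤ Δ t - Δ (t+1) := by linarith
      have hdrop1 : ε^2/c ≤ Δ t - Δ (t+1) := by
        refine le_trans ?_ hdrop
        rw [div_le_div_iff₀ hc (by positivity)]
        nlinarith [mul_nonneg (mul_nonneg (by linarith : (0:ℝ) ≤ 2 * G t - ε)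
          (by linarith : (0:ℝ) ≤ 2 * G t + ε)) (sq_nonneg (θ + R))]
      have hdrop2 : ε ≤ Δ t → (Δ t)^2/c ≤ Δ t - Δ (t+1) := by
        intro hεΔ
        refine le_trans ?_ hdrop
        rw [div_le_div_iff₀ hc (by positivity)]
        have h2G : Δ t ≤ 2 * G t := by linarith
        nlinarith [mul_nonneg (mul_nonneg (by linarith : (0:ℝ) ≤ 2 * G t - Δ t)
          (by linarith [hΔ t] : (0:ℝ) ≤ 2 * G t + Δ t)) (sq_nonneg (θ + R))]
      have hP := auxP_drop c ε (Δ t) (Δ (t+1)) hc hε0 (hΔ (t+1)) hdrop1 hdrop2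
      have h10 : (10.6:ℝ) * Δ (t+1) ≤ 10.6 * Δ t := by linarith [mono t]
      simp only [hΦ]
      linarith
    · -- large-gap step
      have hd := hlarge t h
      have hP := auxP_mono c ε (Δ t) (Δ (t+1)) hc hε0 (hΔ (t+1)) (mono t)
      have h10 : (10.6:ℝ) * Δ (t+1) ≤ 10.6 * Δ t - 1 := by
        have : (10.6:ℝ) * (1/10.6) = 1 := by norm_num
        nlinarith
      simp only [hΦ]
      linarith
  -- iterate the decrease over the window
  have iter : ∀ m : ℕ, Kq + m ≤ N → Φ (Kq + m) ≤ Φ Kq - m := by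
    intro m
    induction m with
    | zero => intro _; simp
    | succ n ih =>
      intro hle
      have h1 : Kq + n ≤ N := by omega
      have h2 : Kq + n < N := by omega
      have h3 := step (Kq + n) (by omega) h2
      have h4 := ih h1
      have heq : Kq + (n+1) = (Kq + n) + 1 := by omega
      rw [heq]
      push_cast
      linarith
  have hfin := iter (Kr + 2*Ks + Kq) (by omega)
  have hNeq : Kq + (Kr + 2*Ks + Kq) = N := by omega
  rw [hNeq] at hfin
  -- bounds on Φ
  have hΦN : 0 ≤ Φ N := by
    simp only [hΦ]
    have := auxP_nonneg c ε (Δ N) hc hε0 (hΔ N)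
    have := hΔ N
    nlinarith
  have hΔKq : Δ Kq ≤ Δ 0 := hanti (Nat.zero_le Kq)
  have hΦKq : Φ Kq < 2*c/ε + 10.6 * Δ 0 := by
    simp only [hΦ]
    have h1 := auxP_lt c ε (Δ Kq) hc hε0 (hΔ Kq)
    nlinarith
  have hKr' : (10.6:ℝ) * Δ 0 < Kr + 1 := by
    rw [hKr]; exact Nat.lt_floor_add_one _
  have hKs' : c/ε ≤ Ks := by
    rw [hKs]; exact Nat.le_ceil _
  have hKq' : (1:ℝ) ≤ Kq := by exact_mod_cast hKq
  have hcast : ((Kr + 2*Ks + Kq : ℕ) : ℝ) = (Kr:ℝ) + 2*(Ks:ℝ) + (Kq:ℝ) := by push_cast; ring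
  rw [hcast] at hfin
  have hsplit : 2*c/ε = c/ε + c/ε := by ring
  have hA : (0:ℝ) ≤ Φ Kq - ((Kr:ℝ) + 2*(Ks:ℝ) + (Kq:ℝ)) := by linarith
  have hB : Φ Kq < c/ε + c/ε + 10.6 * Δ 0 := by linarith
  set x : ℝ := Φ Kq with hxdef
  set u : ℝ := c/ε with hudef
  set d : ℝ := (10.6:ℝ) * Δ 0 with hddef
  clear_value x u d
  clear hcon key step iter hfin hΦN hΦKq hsplit hcast hΔKq hsched hsmall hlarge hΔ hG hδ mono hanti hKs hKr hNeq hN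
  linarith [hA, hB, hKr', hKs', hKq']
end

section
/- Let θ, R be reals with θ ≥ 1 and R ≥ 0, and let 0 < ε ≤ θ + R. Let Δ, G, δ : ℕ → ℝ be sequences with Δ_t ≥ 0, G_t ≥ 0, δ_t ≥ 0 for all t, such that for every t: (i) if G_t > θ + R then Δ_{t+1} ≤ Δ_t − 1/10.6; (ii) if G_t ≤ θ + R then Δ_{t+1} ≤ Δ_t − G_t²/(12·(θ+R)²) and Δ_t ≤ G_t + δ_t. Suppose additionally that δ_t ≤ ε/2 + min_{τ < t} G_τ for all t ≥ 1. Set K_r = ⌊10.6·Δ_0⌋, K_s = ⌈72·(θ+R)²/ε⌉, and K_q = 2 + ⌈log₂((θ+R)/ε)⌉. Then there exists K ≤ K_r + 2·K_s + 2·K_q such that Δ_K ≤ 5ε/2, G_K ≤ ε, and δ_K ≤ 3ε/2. -/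
private lemma count_le (f : ℕ → ℝ) (P : ℕ → Prop) [DecidablePred P] (c : ℝ) :
    ∀ b a, a ≤ b → (∀ t, a ≤ t → t < b → f t + (if P t then c else 0) ≤ f (t + 1)) →
    f a + c * ((Finset.Ico a b).filter P).card ≤ f b := by
  intro b
  induction b with
  | zero =>
      intro a ha _
      obtain rfl : a = 0 := Nat.le_zero.mp ha
      simp
  | succ b ih =>
      intro a ha h
      rcases Nat.lt_or_ge a (b + 1) with h' | h'
      · have hab : a ≤ b := Nat.lt_succ_iff.mp h'
        have h1 := ih a hab (fun t ht ht' => h t ht (ht'.trans (Nat.lt_succ_self b)))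
        have h2 := h b hab (Nat.lt_succ_self b)
        have hico : Finset.Ico a (b + 1) = insert b (Finset.Ico a b) := by
          rw [Nat.Ico_succ_right_eq_insert_Ico hab]
        rw [hico, Finset.filter_insert]
        by_cases hP : P b
        · rw [if_pos hP, Finset.card_insert_of_notMem (by simp)]
          rw [if_pos hP] at h2
          push_cast
          linarith
        · rw [if_neg hP]
          rw [if_neg hP] at h2
          linarith
      · obtain rfl : a = b + 1 := le_antisymm ha h'
        simp

private lemma recip_step {A U' cap d : ℝ} (hcap : 0 < cap) (hA : cap < A)
    (hU' : U' ≤ A - A ^ 2 / d) (hd : 0 < d) (hcapA : cap * A ≤ d * (A - cap)) :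
    1 / A + 1 / d ≤ 1 / max U' cap := by
  have hA0 : 0 < A := hcap.trans hA
  rcases le_total U' cap with h | h
  · rw [max_eq_right h, div_add_div _ _ (ne_of_gt hA0) (ne_of_gt hd),
      div_le_div_iff₀ (by positivity) hcap]
    nlinarith
  · rw [max_eq_left h]
    have hU0 : 0 < U' := lt_of_lt_of_le hcap h
    rw [div_add_div _ _ (ne_of_gt hA0) (ne_of_gt hd), div_le_div_iff₀ (by positivity) hU0]
    have h1 : (d + A) * U' ≤ (d + A) * (A - A ^ 2 / d) :=
      mul_le_mul_of_nonneg_left hU' (by positivity)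
    have h2 : (d + A) * (A - A ^ 2 / d) = A * d - A ^ 3 / d := by field_simp; ring
    have h3 : 0 ≤ A ^ 3 / d := by positivity
    nlinarith [h1, h2, h3]

set_option maxHeartbeats 2000000

/-- Convergence of the approximate generalized Frank–Wolfe algorithm with the
adaptive strategy `δ_t ≤ ε/2 + min_{τ<t} G_τ` for the oracle accuracies, stated
abstractly for real sequences. -/
theorem stmt_12 (θ R ε : ℝ) (hθ : 1 ≤ θ) (hR : 0 ≤ R)
    (hε0 : 0 < ε) (hε : ε ≤ θ + R)
    (Δ G δ : ℕ → ℝ)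
    (hΔ : ∀ t, 0 ≤ Δ t) (hG : ∀ t, 0 ≤ G t) (hδ : ∀ t, 0 ≤ δ t)
    (hlarge : ∀ t, θ + R < G t → Δ (t + 1) ≤ Δ t - 1 / 10.6)
    (hsmall : ∀ t, G t ≤ θ + R →
      Δ (t + 1) ≤ Δ t - (G t) ^ 2 / (12 * (θ + R) ^ 2) ∧ Δ t ≤ G t + δ t)
    (hadapt : ∀ t : ℕ, (ht : 1 ≤ t) →
      δ t ≤ ε / 2 + (Finset.range t).inf' (Finset.nonempty_range_iff.mpr (by omega)) G)
    (Kr Ks Kq : ℕ) (hKr : Kr = ⌊(10.6 : ℝ) * Δ 0⌋₊)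
    (hKs : Ks = ⌈72 * (θ + R) ^ 2 / ε⌉₊)
    (hKq : Kq = 2 + ⌈Real.logb 2 ((θ + R) / ε)⌉₊) :
    ∃ K ≤ Kr + 2 * Ks + 2 * Kq, Δ K ≤ 5 * ε / 2 ∧ G K ≤ ε ∧ δ K ≤ 3 * ε / 2 := by
  classical
  by_contra hcon
  push_neg at hcon
  set C := θ + R with hCdef
  set D := 12 * C ^ 2 with hDdef
  set N := Kr + 2 * Ks + 2 * Kq with hNdef
  clear_value C D N
  have hC1 : (1 : ℝ) ≤ C := by rw [hCdef]; linarith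
  have hC0 : (0 : ℝ) < C := by linarith
  have hD0 : (0 : ℝ) < D := by rw [hDdef]; positivity
  have hDge : 12 * ε ≤ D := by rw [hDdef]; nlinarith
  have hDne : D ≠ 0 := ne_of_gt hD0
  have hεC : ε ≤ C := hε
  -- no pair of ε-small gap times within horizon
  have hpair : ∀ τ K, τ < K → K ≤ N → G τ ≤ ε → ε < G K := by
    intro τ K hτK hKN hGτ
    by_contra hGK
    push_neg at hGK
    have hK1 : 1 ≤ K := by omega
    have hδK : δ K ≤ 3 * ε / 2 := by
      have h1 := hadapt K hK1
      have h2 : δ K ≤ ε / 2 + G τ := by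
        refine le_trans h1 (add_le_add_right ?_ _)
        exact Finset.inf'_le G (Finset.mem_range.mpr hτK)
      linarith
    have hΔK : Δ K ≤ 5 * ε / 2 := by
      have := (hsmall K (le_trans hGK hεC)).2
      linarith
    exact absurd hδK (not_le.mpr (hcon K hKN hΔK hGK))
  -- Δ is nonincreasing stepwise
  have hΔstep : ∀ t, Δ (t + 1) ≤ Δ t := by
    intro t
    rcases le_or_gt (G t) C with h | h
    · have h1 := (hsmall t h).1
      have h2 : 0 ≤ (G t) ^ 2 / D := by positivity
      linarith
    · have h1 := hlarge t h
      have : (0 : ℝ) < 1 / 10.6 := by norm_num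
      linarith
  -- running min of G
  set M : ℕ → ℝ := fun t =>
    if h : 0 < t then (Finset.range t).inf' (Finset.nonempty_range_iff.mpr (by omega)) G
    else G 0 with hMdef
  clear_value M
  have hM_le : ∀ t τ, τ < t → M t ≤ G τ := by
    intro t τ hτ
    have ht : 0 < t := by omega
    simp only [hMdef]
    rw [dif_pos ht]
    exact Finset.inf'_le G (Finset.mem_range.mpr hτ)
  have hM_ex : ∀ t, 1 ≤ t → ∃ τ, τ < t ∧ M t = G τ := by
    intro t ht
    have ht' : 0 < t := ht
    obtain ⟨b, hb, he⟩ := Finset.exists_mem_eq_inf'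
      (Finset.nonempty_range_iff.mpr (by omega : t ≠ 0)) G
    refine ⟨b, Finset.mem_range.mp hb, ?_⟩
    simp only [hMdef]
    rw [dif_pos ht']
    exact he
  have hM_mono : ∀ t, 1 ≤ t → M (t + 1) ≤ M t := by
    intro t ht
    obtain ⟨τ, hτ, he⟩ := hM_ex t ht
    rw [he]
    exact hM_le (t + 1) τ (by omega)
  have hδM : ∀ t, 1 ≤ t → δ t ≤ ε / 2 + M t := by
    intro t ht
    simp only [hMdef]
    rw [dif_pos (show 0 < t from ht)]
    exact hadapt t ht
  -- the three potentials
  set f₁ : ℕ → ℝ := fun t => 1 / max (Δ t + 2 * M t - ε / 2) ε with hf₁def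
  set f₂ : ℕ → ℝ := fun t => 1 / max (Δ t - 3 * ε / 2) (ε / 2) with hf₂def
  set f₃ : ℕ → ℝ := fun t => -min (Δ t) (5 * ε / 2) with hf₃def
  clear_value f₁ f₂ f₃
  -- monotonicity of potentials
  have mono1 : ∀ t, 1 ≤ t → f₁ t ≤ f₁ (t + 1) := by
    intro t ht
    simp only [hf₁def]
    apply one_div_le_one_div_of_le (lt_of_lt_of_le hε0 (le_max_right _ _))
    exact max_le_max (by linarith [hΔstep t, hM_mono t ht]) le_rfl
  have mono2 : ∀ t, f₂ t ≤ f₂ (t + 1) := by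
    intro t
    simp only [hf₂def]
    apply one_div_le_one_div_of_le (lt_of_lt_of_le (by linarith) (le_max_right _ _))
    exact max_le_max (by linarith [hΔstep t]) le_rfl
  have mono3 : ∀ t, f₃ t ≤ f₃ (t + 1) := by
    intro t
    simp only [hf₃def, neg_le_neg_iff]
    exact min_le_min (hΔstep t) le_rfl
  -- potential-1 step at a small-gap step
  have step1 : ∀ t, 1 ≤ t → (∀ τ, τ < t → ε < G τ) → (∃ τ, τ < t ∧ G τ ≤ C) → G t ≤ C →
      f₁ t + 1 / (16 * D) ≤ f₁ (t + 1) := by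
    rintro t ht hprev ⟨τs, hτs, hGτs⟩ hGt
    have hmC : M t ≤ C := le_trans (hM_le t τs hτs) hGτs
    have hmε : ε < M t := by
      obtain ⟨τ, hτ, he⟩ := hM_ex t ht
      rw [he]; exact hprev τ hτ
    have hΔt : Δ t ≤ G t + ε / 2 + M t := by
      have h1 := (hsmall t hGt).2
      have h2 := hδM t ht
      linarith
    have hdropΔ := (hsmall t hGt).1
    have hm'm : M (t + 1) ≤ M t := hM_mono t ht
    have hm'G : M (t + 1) ≤ G t := hM_le (t + 1) t (by omega)
    simp only [hf₁def]
    have hAc : ε < Δ t + 2 * M t - ε / 2 := by linarith [hΔ t]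
    rw [max_eq_left (le_of_lt hAc)]
    set A := Δ t + 2 * M t - ε / 2 with hAdef
    clear_value A
    have hA32 : 3 * ε / 2 < A := by rw [hAdef]; linarith [hΔ t]
    have hA4 : A ≤ G t + 3 * M t := by rw [hAdef]; linarith
    have hA0 : (0 : ℝ) < A := by linarith
    apply recip_step hε0 hAc ?_ (by linarith) ?_
    · -- U' ≤ A - A^2/(16 D)
      have hA2 : A ^ 2 ≤ 16 * (G t) ^ 2 + 32 * D * (M t - min (M t) (G t)) := by
        rcases le_total (M t) (G t) with h | h
        · rw [min_eq_left h]
          have h4 : A ≤ 4 * G t := by linarith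
          nlinarith [hA0]
        · rw [min_eq_right h]
          have hsq : A ^ 2 ≤ (G t + 3 * M t) ^ 2 := by nlinarith [hA0]
          have hid : (G t + 3 * M t) ^ 2
              = 16 * (G t) ^ 2 + (M t - G t) * (9 * M t + 15 * G t) := by ring
          have h2 : (M t - G t) * (9 * M t + 15 * G t) ≤ (M t - G t) * (24 * C) := by
            apply mul_le_mul_of_nonneg_left ?_ (by linarith)
            linarith [hG t]
          have h3 : (M t - G t) * (24 * C) ≤ (M t - G t) * (32 * D) := by
            apply mul_le_mul_of_nonneg_left ?_ (by linarith)
            rw [hDdef]; nlinarith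
          linarith
      have hdiv : A ^ 2 / (16 * D) ≤ (G t) ^ 2 / D + 2 * (M t - min (M t) (G t)) := by
        rw [div_le_iff₀ (by linarith)]
        have he : ((G t) ^ 2 / D + 2 * (M t - min (M t) (G t))) * (16 * D)
            = 16 * (G t) ^ 2 + 32 * D * (M t - min (M t) (G t)) := by
          field_simp; ring
        rw [he]; exact hA2
      have hmin : M (t + 1) ≤ min (M t) (G t) := le_min hm'm hm'G
      have : Δ (t + 1) + 2 * M (t + 1) - ε / 2
          ≤ Δ t - (G t) ^ 2 / D + 2 * min (M t) (G t) - ε / 2 := by linarith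
      linarith [hdiv, hdropΔ, hmin]
    · -- ε * A ≤ 16 D (A - ε)
      have p1 : (0:ℝ) ≤ (D - 12 * ε) * (A - ε) :=
        mul_nonneg (by linarith) (by linarith)
      have p2 : (0:ℝ) ≤ ε * (191 * A - 192 * ε) :=
        mul_nonneg hε0.le (by linarith)
      nlinarith [p1, p2]
  -- potential-2 step
  have step2 : ∀ T₀ t, T₀ < t → G T₀ ≤ ε → G t ≤ C → 5 * ε / 2 < Δ t →
      f₂ t + 1 / D ≤ f₂ (t + 1) := by
    intro T₀ t hTt hGT hGt hΔ5
    have ht : 1 ≤ t := by omega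
    have hmε : M t ≤ ε := le_trans (hM_le t T₀ hTt) hGT
    have hΔt : Δ t ≤ G t + 3 * ε / 2 := by
      have h1 := (hsmall t hGt).2
      have h2 := hδM t ht
      linarith
    have hdropΔ := (hsmall t hGt).1
    simp only [hf₂def]
    have hAc : ε / 2 < Δ t - 3 * ε / 2 := by linarith
    rw [max_eq_left (le_of_lt hAc)]
    have hGA : Δ t - 3 * ε / 2 ≤ G t := by linarith
    have hA0 : (0 : ℝ) < Δ t - 3 * ε / 2 := by linarith
    apply recip_step (by linarith) hAc ?_ hD0 ?_
    · have hsq : (Δ t - 3 * ε / 2) ^ 2 ≤ (G t) ^ 2 := by nlinarith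
      have : (Δ t - 3 * ε / 2) ^ 2 / D ≤ (G t) ^ 2 / D := by gcongr
      linarith
    · have hAε : ε < Δ t - 3 * ε / 2 := by linarith
      have p1 : (0:ℝ) ≤ (D - 12 * ε) * ((Δ t - 3 * ε / 2) - ε / 2) :=
        mul_nonneg (by linarith) (by linarith)
      have p2 : (0:ℝ) ≤ ε * ((Δ t - 3 * ε / 2) - ε) :=
        mul_nonneg hε0.le (by linarith)
      nlinarith [p1, p2]

  -- potential-3 step
  have step3 : ∀ t, G t ≤ C → ε < G t → Δ t ≤ 5 * ε / 2 →
      f₃ t + ε ^ 2 / D ≤ f₃ (t + 1) := by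
    intro t hGt hεG hΔ5
    have hdropΔ := (hsmall t hGt).1
    simp only [hf₃def]
    rw [min_eq_left hΔ5]
    have h1 : min (Δ (t + 1)) (5 * ε / 2) ≤ Δ (t + 1) := min_le_left _ _
    have h2 : ε ^ 2 ≤ (G t) ^ 2 := by nlinarith
    have h3 : ε ^ 2 / D ≤ (G t) ^ 2 / D := (div_le_div_iff_of_pos_right hD0).mpr h2
    linarith
  -- the small-gap index set
  set SS : Finset ℕ := (Finset.range N).filter (fun t => G t ≤ C) with hSSdef
  clear_value SS
  -- at most Kr large steps
  have hL : ((Finset.range N).filter (fun t => C < G t)).card ≤ Kr := by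
    have hc := count_le (fun t => -Δ t) (fun t => C < G t) (1 / 10.6) N 0 (Nat.zero_le _) ?_
    swap
    · intro t _ _
      by_cases h : C < G t
      · rw [if_pos h]
        show -Δ t + 1 / 10.6 ≤ -Δ (t + 1)
        linarith [hlarge t h]
      · rw [if_neg h]
        show -Δ t + 0 ≤ -Δ (t + 1)
        linarith [hΔstep t]
    rw [hKr]
    apply Nat.le_floor
    rw [← Finset.range_eq_Ico] at hc
    have h2 : (0:ℝ) ≤ Δ N := hΔ N
    have hc' : -Δ 0 + 1 / 10.6 * (((Finset.range N).filter (fun t => C < G t)).card : ℝ)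
        ≤ -Δ N := hc
    linarith [hc']
  have hScard : 2 * Ks + 2 * Kq ≤ SS.card := by
    have hpartition := Finset.card_filter_add_card_filter_not
      (s := Finset.range N) (p := fun t => G t ≤ C)
    simp only [not_le, Finset.card_range] at hpartition
    rw [hSSdef]
    omega
  have hKq2 : 2 ≤ Kq := by omega
  have hSne : SS.Nonempty := by
    rw [← Finset.card_pos]
    omega
  set s1 := SS.min' hSne with hs1def
  have hs1mem : s1 ∈ (Finset.range N).filter (fun t => G t ≤ C) := by
    rw [← hSSdef, hs1def]
    exact SS.min'_mem hSne
  have hs1min : ∀ t, t < N → G t ≤ C → s1 ≤ t := by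
    intro t h1 h2
    rw [hs1def]
    exact Finset.min'_le _ _ (by
      rw [hSSdef]
      exact Finset.mem_filter.mpr ⟨Finset.mem_range.mpr h1, h2⟩)
  clear_value s1
  have hs1N : s1 < N := by
    have := (Finset.mem_filter.mp hs1mem).1
    exact Finset.mem_range.mp this
  have hs1C : G s1 ≤ C := (Finset.mem_filter.mp hs1mem).2
  have hKsR : 72 * C ^ 2 / ε ≤ (Ks : ℝ) := by
    rw [hKs]
    exact Nat.le_ceil _
  have hcardlow : (144 : ℝ) * (C ^ 2 / ε) + 4 ≤ (SS.card : ℝ) := by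
    have h1 : ((2 * Ks + 2 * Kq : ℕ) : ℝ) ≤ (SS.card : ℝ) := by exact_mod_cast hScard
    have h2 : (2 : ℝ) ≤ (Kq : ℝ) := by exact_mod_cast hKq2
    push_cast at h1
    have e : (144 : ℝ) * (C ^ 2 / ε) = 2 * (72 * C ^ 2 / ε) := by ring
    linarith [hKsR]
  have hq0 : (0:ℝ) < C ^ 2 / ε := div_pos (pow_pos hC0 2) hε0
  have hεne : ε ≠ 0 := ne_of_gt hε0
  by_cases hex : ∃ t, t < N ∧ G t ≤ ε
  · -- there is a first time T with gap value ≤ ε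
    obtain ⟨T, ⟨hTN, hGT⟩, hmin⟩ :
        ∃ T, (T < N ∧ G T ≤ ε) ∧ ∀ τ, τ < T → ¬(τ < N ∧ G τ ≤ ε) :=
      ⟨Nat.find hex, Nat.find_spec hex, fun τ h => Nat.find_min hex h⟩
    have hTprev : ∀ τ, τ < T → ε < G τ := by
      intro τ hτ
      have h := hmin τ hτ
      push_neg at h
      exact h (by omega)
    have hs1T : s1 ≤ T := hs1min T hTN (le_trans hGT hεC)
    have hXT : (0:ℝ) < Δ T + 3 * ε / 2 := by linarith [hΔ T]
    -- count of small steps in (s1, T)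
    have hn1R : (((Finset.Ico (s1 + 1) T).filter (fun t => G t ≤ C)).card : ℝ)
        ≤ 16 * D / (Δ T + 3 * ε / 2) := by
      rcases eq_or_lt_of_le hs1T with he | hlt
      · rw [show Finset.Ico (s1 + 1) T = ∅ from Finset.Ico_eq_empty (by omega)]
        simpa using le_of_lt (div_pos (by linarith) hXT)
      · have hT1 : 1 ≤ T := by omega
        have hMTε : ε < M T := by
          obtain ⟨τ, hτ, heq⟩ := hM_ex T hT1
          rw [heq]; exact hTprev τ hτ
        have hcount := count_le f₁ (fun t => G t ≤ C) (1 / (16 * D)) T (s1 + 1) (by omega) ?_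
        swap
        · intro t ht1 ht2
          by_cases hsm : G t ≤ C
          · rw [if_pos hsm]
            exact step1 t (by omega) (fun τ hτ => hTprev τ (by omega)) ⟨s1, by omega, hs1C⟩ hsm
          · rw [if_neg hsm]
            linarith [mono1 t (by omega)]
        have hf1T : f₁ T ≤ 1 / (Δ T + 3 * ε / 2) := by
          simp only [hf₁def]
          apply one_div_le_one_div_of_le hXT
          refine le_trans ?_ (le_max_left _ _)
          linarith
        have hf1s : 0 ≤ f₁ (s1 + 1) := by
          simp only [hf₁def]
          exact le_of_lt (one_div_pos.mpr (lt_of_lt_of_le hε0 (le_max_right _ _)))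
        have h : 1 / (16 * D) * (((Finset.Ico (s1 + 1) T).filter (fun t => G t ≤ C)).card : ℝ)
            ≤ 1 / (Δ T + 3 * ε / 2) := by linarith
        have h2 : (((Finset.Ico (s1 + 1) T).filter (fun t => G t ≤ C)).card : ℝ)
            = (16 * D) * (1 / (16 * D)
              * (((Finset.Ico (s1 + 1) T).filter (fun t => G t ≤ C)).card : ℝ)) := by
          field_simp
        rw [h2]
        calc (16 * D) * (1 / (16 * D)
              * (((Finset.Ico (s1 + 1) T).filter (fun t => G t ≤ C)).card : ℝ))
            ≤ (16 * D) * (1 / (Δ T + 3 * ε / 2)) :=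
              mul_le_mul_of_nonneg_left h (by linarith)
          _ = 16 * D / (Δ T + 3 * ε / 2) := by ring
    -- count of small steps in (T, N) with large Δ
    have hniR : (((Finset.Ico (T + 1) N).filter
          (fun t => G t ≤ C ∧ 5 * ε / 2 < Δ t)).card : ℝ)
        ≤ D * (2 / ε - 1 / max (Δ T - 3 * ε / 2) (ε / 2)) := by
      have hcount := count_le f₂ (fun t => G t ≤ C ∧ 5 * ε / 2 < Δ t) (1 / D) N (T + 1)
        (by omega) ?_
      swap
      · intro t ht1 ht2
        by_cases hp : G t ≤ C ∧ 5 * ε / 2 < Δ t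
        · rw [if_pos hp]
          exact step2 T t (by omega) hGT hp.1 hp.2
        · rw [if_neg hp]
          linarith [mono2 t]
      have hf2N : f₂ N ≤ 2 / ε := by
        simp only [hf₂def]
        rw [show (2:ℝ) / ε = 1 / (ε / 2) from (one_div_div ε 2).symm]
        exact one_div_le_one_div_of_le (by linarith) (le_max_right _ _)
      have hf2T1 : 1 / max (Δ T - 3 * ε / 2) (ε / 2) ≤ f₂ (T + 1) := by
        simp only [hf₂def]
        apply one_div_le_one_div_of_le (lt_of_lt_of_le (by linarith) (le_max_right _ _))
        exact max_le_max (by linarith [hΔstep T]) le_rfl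
      have h : 1 / D * ((((Finset.Ico (T + 1) N).filter
            (fun t => G t ≤ C ∧ 5 * ε / 2 < Δ t)).card : ℝ))
          ≤ 2 / ε - 1 / max (Δ T - 3 * ε / 2) (ε / 2) := by linarith
      have h2 : ((((Finset.Ico (T + 1) N).filter
            (fun t => G t ≤ C ∧ 5 * ε / 2 < Δ t)).card : ℝ))
          = D * (1 / D * ((((Finset.Ico (T + 1) N).filter
            (fun t => G t ≤ C ∧ 5 * ε / 2 < Δ t)).card : ℝ))) := by
        field_simp
      rw [h2]
      exact mul_le_mul_of_nonneg_left h hD0.le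
    -- count of small steps in (T, N) with small Δ
    have hn2R : (((Finset.Ico (T + 1) N).filter
          (fun t => G t ≤ C ∧ ε < G t ∧ Δ t ≤ 5 * ε / 2)).card : ℝ)
        ≤ D / ε ^ 2 * min (Δ T) (5 * ε / 2) := by
      have hcount := count_le f₃ (fun t => G t ≤ C ∧ ε < G t ∧ Δ t ≤ 5 * ε / 2) (ε ^ 2 / D) N
        (T + 1) (by omega) ?_
      swap
      · intro t ht1 ht2
        by_cases hp : G t ≤ C ∧ ε < G t ∧ Δ t ≤ 5 * ε / 2
        · rw [if_pos hp]
          exact step3 t hp.1 hp.2.1 hp.2.2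
        · rw [if_neg hp]
          linarith [mono3 t]
      have hf3N : f₃ N ≤ 0 := by
        simp only [hf₃def, neg_nonpos]
        exact le_min (hΔ N) (by positivity)
      have hf3T1 : -min (Δ T) (5 * ε / 2) ≤ f₃ (T + 1) := by
        simp only [hf₃def, neg_le_neg_iff]
        exact min_le_min (hΔstep T) le_rfl
      have h : ε ^ 2 / D * ((((Finset.Ico (T + 1) N).filter
            (fun t => G t ≤ C ∧ ε < G t ∧ Δ t ≤ 5 * ε / 2)).card : ℝ))
          ≤ min (Δ T) (5 * ε / 2) := by linarith
      have h2 : ((((Finset.Ico (T + 1) N).filter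
            (fun t => G t ≤ C ∧ ε < G t ∧ Δ t ≤ 5 * ε / 2)).card : ℝ))
          = D / ε ^ 2 * (ε ^ 2 / D * ((((Finset.Ico (T + 1) N).filter
            (fun t => G t ≤ C ∧ ε < G t ∧ Δ t ≤ 5 * ε / 2)).card : ℝ))) := by
        field_simp
        ring
      rw [h2]
      exact mul_le_mul_of_nonneg_left h (le_of_lt (div_pos hD0 (pow_pos hε0 2)))
    -- the key numeric bound
    have key : 16 * D / (Δ T + 3 * ε / 2) + D * (2 / ε - 1 / max (Δ T - 3 * ε / 2) (ε / 2))
        + D / ε ^ 2 * min (Δ T) (5 * ε / 2) ≤ 128 * (C ^ 2 / ε) := by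
      have h128 : 128 * (C ^ 2 / ε) = 32 / 3 * (D / ε) := by rw [hDdef]; ring
      rw [h128]
      rcases le_or_gt (Δ T) (2 * ε) with hcase | hcase
      · rw [max_eq_right (by linarith), min_eq_left (by linarith)]
        rw [show (2:ℝ) / ε - 1 / (ε / 2) = 0 from by rw [one_div_div]; ring, mul_zero]
        have core : 16 / (Δ T + 3 * ε / 2) + Δ T / ε ^ 2 ≤ 32 / (3 * ε) := by
          rw [div_add_div _ _ (ne_of_gt hXT) (by positivity : (ε ^ 2 : ℝ) ≠ 0),
            div_le_div_iff₀ (by positivity) (by positivity)]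
          nlinarith [mul_nonneg (mul_nonneg hε0.le (hΔ T))
              (show (0:ℝ) ≤ 2 * ε - Δ T by linarith),
            mul_nonneg (mul_nonneg hε0.le hε0.le) (hΔ T)]
        calc 16 * D / (Δ T + 3 * ε / 2) + 0 + D / ε ^ 2 * Δ T
            = D * (16 / (Δ T + 3 * ε / 2) + Δ T / ε ^ 2) := by ring
          _ ≤ D * (32 / (3 * ε)) := mul_le_mul_of_nonneg_left core hD0.le
          _ = 32 / 3 * (D / ε) := by ring
      · have t1 : 16 * D / (Δ T + 3 * ε / 2) ≤ 16 * D / (2 * ε + 3 * ε / 2) :=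
          div_le_div_of_nonneg_left (by positivity) (by linarith) (by linarith)
        have t2 : D * (2 / ε - 1 / max (Δ T - 3 * ε / 2) (ε / 2)) ≤ D * (2 / ε) := by
          apply mul_le_mul_of_nonneg_left ?_ hD0.le
          have hmx : (0:ℝ) < max (Δ T - 3 * ε / 2) (ε / 2) :=
            lt_of_lt_of_le (by linarith) (le_max_right _ _)
          have := le_of_lt (one_div_pos.mpr hmx)
          linarith
        have t3 : D / ε ^ 2 * min (Δ T) (5 * ε / 2) ≤ D / ε ^ 2 * (5 * ε / 2) :=
          mul_le_mul_of_nonneg_left (min_le_right _ _) (le_of_lt (div_pos hD0 (pow_pos hε0 2)))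
        have e1 : 16 * D / (2 * ε + 3 * ε / 2) = 32 / 7 * (D / ε) := by
          rw [show (2 * ε + 3 * ε / 2 : ℝ) = 7 * ε / 2 from by ring]
          field_simp
          ring
        have e3 : D / ε ^ 2 * (5 * ε / 2) = 5 / 2 * (D / ε) := by
          field_simp
        have e2 : D * (2 / ε) = 2 * (D / ε) := by ring
        have hq : (0:ℝ) ≤ D / ε := le_of_lt (div_pos hD0 hε0)
        linarith
    -- decomposition of the small-step set
    have hdec : SS.card ≤ 2 + ((Finset.Ico (s1 + 1) T).filter (fun t => G t ≤ C)).card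
        + ((Finset.Ico (T + 1) N).filter (fun t => G t ≤ C ∧ 5 * ε / 2 < Δ t)).card
        + ((Finset.Ico (T + 1) N).filter
            (fun t => G t ≤ C ∧ ε < G t ∧ Δ t ≤ 5 * ε / 2)).card := by
      have hunion : Finset.Ico 0 (s1 + 1) ∪ Finset.Ico (s1 + 1) (T + 1)
          ∪ Finset.Ico (T + 1) N = Finset.range N := by
        rw [Finset.Ico_union_Ico_eq_Ico (by omega) (by omega),
          Finset.Ico_union_Ico_eq_Ico (by omega) (by omega), ← Finset.range_eq_Ico]
      have hsub : SS.card ≤ ((Finset.Ico 0 (s1 + 1)).filter (fun t => G t ≤ C)).card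
          + ((Finset.Ico (s1 + 1) (T + 1)).filter (fun t => G t ≤ C)).card
          + ((Finset.Ico (T + 1) N).filter (fun t => G t ≤ C)).card := by
        rw [hSSdef, ← hunion, Finset.filter_union, Finset.filter_union]
        exact le_trans (Finset.card_union_le _ _)
          (add_le_add_left (Finset.card_union_le _ _) _)
      have hp1 : ((Finset.Ico 0 (s1 + 1)).filter (fun t => G t ≤ C)).card ≤ 1 := by
        have hss : (Finset.Ico 0 (s1 + 1)).filter (fun t => G t ≤ C) ⊆ {s1} := by
          intro t ht
          rw [Finset.mem_filter, Finset.mem_Ico] at ht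
          rw [Finset.mem_singleton]
          have h1 : s1 ≤ t := hs1min t (by omega) ht.2
          omega
        simpa using Finset.card_le_card hss
      have hp2 : ((Finset.Ico (s1 + 1) (T + 1)).filter (fun t => G t ≤ C)).card
          ≤ ((Finset.Ico (s1 + 1) T).filter (fun t => G t ≤ C)).card + 1 := by
        have hss : (Finset.Ico (s1 + 1) (T + 1)).filter (fun t => G t ≤ C)
            ⊆ (Finset.Ico (s1 + 1) T).filter (fun t => G t ≤ C) ∪ {T} := by
          intro t ht
          rw [Finset.mem_filter, Finset.mem_Ico] at ht
          rw [Finset.mem_union, Finset.mem_filter, Finset.mem_Ico, Finset.mem_singleton]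
          rcases Nat.lt_or_ge t T with h | h
          · exact Or.inl ⟨⟨ht.1.1, h⟩, ht.2⟩
          · exact Or.inr (by omega)
        calc ((Finset.Ico (s1 + 1) (T + 1)).filter (fun t => G t ≤ C)).card
            ≤ ((Finset.Ico (s1 + 1) T).filter (fun t => G t ≤ C) ∪ {T}).card :=
              Finset.card_le_card hss
          _ ≤ ((Finset.Ico (s1 + 1) T).filter (fun t => G t ≤ C)).card
              + ({T} : Finset ℕ).card := Finset.card_union_le _ _
          _ = ((Finset.Ico (s1 + 1) T).filter (fun t => G t ≤ C)).card + 1 := by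
              rw [Finset.card_singleton]
      have hp3 : ((Finset.Ico (T + 1) N).filter (fun t => G t ≤ C)).card
          ≤ ((Finset.Ico (T + 1) N).filter (fun t => G t ≤ C ∧ 5 * ε / 2 < Δ t)).card
          + ((Finset.Ico (T + 1) N).filter
              (fun t => G t ≤ C ∧ ε < G t ∧ Δ t ≤ 5 * ε / 2)).card := by
        have hss : (Finset.Ico (T + 1) N).filter (fun t => G t ≤ C)
            ⊆ (Finset.Ico (T + 1) N).filter (fun t => G t ≤ C ∧ 5 * ε / 2 < Δ t)
            ∪ (Finset.Ico (T + 1) N).filter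
                (fun t => G t ≤ C ∧ ε < G t ∧ Δ t ≤ 5 * ε / 2) := by
          intro t ht
          rw [Finset.mem_filter, Finset.mem_Ico] at ht
          have hεG : ε < G t := hpair T t (by omega) (by omega) hGT
          rw [Finset.mem_union, Finset.mem_filter, Finset.mem_filter]
          rcases le_or_gt (Δ t) (5 * ε / 2) with h | h
          · exact Or.inr ⟨Finset.mem_Ico.mpr ht.1, ht.2, hεG, h⟩
          · exact Or.inl ⟨Finset.mem_Ico.mpr ht.1, ht.2, h⟩
        exact le_trans (Finset.card_le_card hss) (Finset.card_union_le _ _)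
      omega
    -- final contradiction
    have hup : (SS.card : ℝ) ≤ 2 + 128 * (C ^ 2 / ε) := by
      have hd : ((SS.card : ℕ) : ℝ) ≤ ((2 + ((Finset.Ico (s1 + 1) T).filter
            (fun t => G t ≤ C)).card
          + ((Finset.Ico (T + 1) N).filter (fun t => G t ≤ C ∧ 5 * ε / 2 < Δ t)).card
          + ((Finset.Ico (T + 1) N).filter
              (fun t => G t ≤ C ∧ ε < G t ∧ Δ t ≤ 5 * ε / 2)).card : ℕ) : ℝ) := by
        exact_mod_cast hdec
      push_cast at hd
      linarith [hn1R, hniR, hn2R, key]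
    linarith
  · -- no time with gap value ≤ ε at all
    push_neg at hex
    have hAall : ∀ t, t < N → ε < G t := hex
    have hN1 : 1 ≤ N := by omega
    have hcount := count_le f₁ (fun t => G t ≤ C) (1 / (16 * D)) N (s1 + 1) (by omega) ?_
    swap
    · intro t ht1 ht2
      by_cases hsm : G t ≤ C
      · rw [if_pos hsm]
        exact step1 t (by omega) (fun τ hτ => hAall τ (by omega)) ⟨s1, by omega, hs1C⟩ hsm
      · rw [if_neg hsm]
        linarith [mono1 t (by omega)]
    have hMNε : ε < M N := by
      obtain ⟨τ, hτ, heq⟩ := hM_ex N hN1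
      rw [heq]; exact hAall τ hτ
    have hf1N : f₁ N ≤ 1 / (3 * ε / 2) := by
      simp only [hf₁def]
      apply one_div_le_one_div_of_le (by linarith)
      refine le_trans ?_ (le_max_left _ _)
      linarith [hΔ N]
    have hf1s : 0 ≤ f₁ (s1 + 1) := by
      simp only [hf₁def]
      exact le_of_lt (one_div_pos.mpr (lt_of_lt_of_le hε0 (le_max_right _ _)))
    have h : 1 / (16 * D) * (((Finset.Ico (s1 + 1) N).filter (fun t => G t ≤ C)).card : ℝ)
        ≤ 1 / (3 * ε / 2) := by linarith
    have hnR : (((Finset.Ico (s1 + 1) N).filter (fun t => G t ≤ C)).card : ℝ)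
        ≤ 128 * (C ^ 2 / ε) := by
      have h2 : (((Finset.Ico (s1 + 1) N).filter (fun t => G t ≤ C)).card : ℝ)
          = (16 * D) * (1 / (16 * D)
            * (((Finset.Ico (s1 + 1) N).filter (fun t => G t ≤ C)).card : ℝ)) := by
        field_simp
      rw [h2]
      calc (16 * D) * (1 / (16 * D)
            * (((Finset.Ico (s1 + 1) N).filter (fun t => G t ≤ C)).card : ℝ))
          ≤ (16 * D) * (1 / (3 * ε / 2)) := mul_le_mul_of_nonneg_left h (by linarith)
        _ = 128 * (C ^ 2 / ε) := by rw [hDdef]; field_simp; ring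
    have hdec : SS.card ≤ 1 + ((Finset.Ico (s1 + 1) N).filter (fun t => G t ≤ C)).card := by
      have hunion : Finset.Ico 0 (s1 + 1) ∪ Finset.Ico (s1 + 1) N = Finset.range N := by
        rw [Finset.Ico_union_Ico_eq_Ico (by omega) (by omega), ← Finset.range_eq_Ico]
      have hsub : SS.card ≤ ((Finset.Ico 0 (s1 + 1)).filter (fun t => G t ≤ C)).card
          + ((Finset.Ico (s1 + 1) N).filter (fun t => G t ≤ C)).card := by
        rw [hSSdef, ← hunion, Finset.filter_union]
        exact Finset.card_union_le _ _
      have hp1 : ((Finset.Ico 0 (s1 + 1)).filter (fun t => G t ≤ C)).card ≤ 1 := by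
        have hss : (Finset.Ico 0 (s1 + 1)).filter (fun t => G t ≤ C) ⊆ {s1} := by
          intro t ht
          rw [Finset.mem_filter, Finset.mem_Ico] at ht
          rw [Finset.mem_singleton]
          have h1 : s1 ≤ t := hs1min t (by omega) ht.2
          omega
        simpa using Finset.card_le_card hss
      omega
    have hup : (SS.card : ℝ) ≤ 1 + 128 * (C ^ 2 / ε) := by
      have hd : ((SS.card : ℕ) : ℝ) ≤ ((1 + ((Finset.Ico (s1 + 1) N).filter
          (fun t => G t ≤ C)).card : ℕ) : ℝ) := by exact_mod_cast hdec
      push_cast at hd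
      linarith [hnR]
    linarith
end

section
/- Let θ > 0, δ ≥ 0, c > 2, and set τ = min{δ, (c−2)·θ}/(c·θ), so τ < 1. Let OPT and V be real numbers with OPT ≤ −θ and OPT ≤ V ≤ (1−τ)·OPT, and set G^a = −θ − V. Then at least one of the following holds: (C.1) G^a > θ; or (C.2) V ≤ OPT + δ. (In words: solving the linearized subproblem to relative error τ guarantees either the large-gap condition or δ-suboptimality.) -/
/-!
Write `m = min δ ((c - 2)θ) = τ·cθ`. If `V` is not `δ`-suboptimal then
`τ·cθ = m ≤ δ < V - OPT ≤ τ·(-OPT)`, so the optimum is deep: `OPT < -cθ`.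
A relative-error-`τ` value then satisfies `V ≤ (1 - τ)·OPT < -cθ + m ≤ -2θ`,
which is exactly the large-gap condition `Gᵃ = -θ - V > θ`.
-/

theorem lt_neg_add_mul_of_le_one_sub_mul {τ K OPT V : ℝ} (hτ₀ : 0 ≤ τ) (hτ₁ : τ < 1)
    (hub : V ≤ (1 - τ) * OPT) (hgap : τ * K < V - OPT) : V < -K + τ * K := by
  have hdeep : OPT < -K := by linarith [lt_of_mul_lt_mul_left (by linarith : τ * K < τ * -OPT) hτ₀]
  calc V ≤ (1 - τ) * OPT := hub
    _ < (1 - τ) * -K := mul_lt_mul_of_pos_left hdeep (by linarith)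
    _ = -K + τ * K := by ring

theorem stmt_14_general (θ δ c : ℝ) (hθ : 0 < θ) (hδ : 0 ≤ δ) (hc : 2 < c)
    (τ : ℝ) (hτ : τ = min δ ((c - 2) * θ) / (c * θ))
    (OPT V Ga : ℝ)
    (hub : V ≤ (1 - τ) * OPT)
    (hGa : Ga = -θ - V) :
    τ < 1 ∧ (θ < Ga ∨ V ≤ OPT + δ) := by
  have hcθ : 0 < c * θ := by nlinarith
  have hm_le_δ : min δ ((c - 2) * θ) ≤ δ := min_le_left _ _
  have hm_le : min δ ((c - 2) * θ) ≤ (c - 2) * θ := min_le_right _ _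
  have hτcθ : τ * (c * θ) = min δ ((c - 2) * θ) := by
    rw [hτ]; exact div_mul_cancel₀ _ hcθ.ne'
  have hτ₀ : 0 ≤ τ := hτ ▸ div_nonneg (le_min hδ (by nlinarith)) hcθ.le
  have hτ₁ : τ < 1 := by
    rw [hτ, div_lt_one hcθ]; linarith
  refine ⟨hτ₁, or_iff_not_imp_right.mpr fun hsub => ?_⟩
  rw [not_le] at hsub
  have hV := lt_neg_add_mul_of_le_one_sub_mul (K := c * θ) hτ₀ hτ₁ hub (by linarith)
  linarith

/-- Solving the linearized subproblem to relative error `τ = min{δ, (c-2)θ}/(cθ)`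
guarantees either the large-gap condition `Gᵃ > θ` or `δ`-suboptimality. -/
theorem stmt_14 (θ δ c : ℝ) (hθ : 0 < θ) (hδ : 0 ≤ δ) (hc : 2 < c)
    (τ : ℝ) (hτ : τ = min δ ((c - 2) * θ) / (c * θ))
    (OPT V Ga : ℝ) (hOPT : OPT ≤ -θ)
    (hlb : OPT ≤ V) (hub : V ≤ (1 - τ) * OPT)
    (hGa : Ga = -θ - V) :
    τ < 1 ∧ (θ < Ga ∨ V ≤ OPT + δ) :=
  stmt_14_general θ δ c hθ hδ hc τ hτ OPT V Ga hub hGa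
end

section
/- Let E be a real inner product space, H : E → E a symmetric linear map (⟨H w₁, w₂⟩ = ⟨w₁, H w₂⟩ for all w₁, w₂), s ∈ E, u, v ∈ E, and let θ, R, g_x, g_h, G be real numbers. Assume: (a) ⟨H u, w⟩ = −⟨s, w⟩ for every w ∈ E; (b) ⟨s, u⟩ = −θ; (c) ⟨H v, v⟩ ≤ ⟨s, v⟩²; (d) θ ≥ 1; (e) |g_h − g_x| ≤ R with R ≥ 0; (f) G = ⟨s, u − v⟩ + g_x − g_h and G ≥ 0. Then ⟨H(v − u), v − u⟩ ≤ (G + θ + R)². (This is the bound D_t ≤ G_t^a + θ + R_g relating the Hessian distance to the approximate duality gap.) -/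
open scoped RealInnerProductSpace

/-!
Since `H u = -s`, expanding the quadratic form gives
`⟨H(v-u), v-u⟩ = ⟨H v, v⟩ + 2⟨s, v⟩ + θ ≤ t² - 2t + θ` with `t = -⟨s, v⟩`, and the definition
of the gap says `t = G + θ + (g_h - g_x)`, so `t` lies within `R` of `G + θ ≥ 1`.
On that interval `t² - 2t + θ = (t - 1)² + θ - 1` is at most `(G + θ + R)²`.
-/

theorem LinearMap.IsSymmetric.inner_map_sub_sub_of_inner_map_eq_neg {E : Type*}
    [NormedAddCommGroup E] [InnerProductSpace ℝ E] {H : E →ₗ[ℝ] E} (hH : H.IsSymmetric)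
    {s u : E} (hu : ∀ w : E, ⟪H u, w⟫ = -⟪s, w⟫) (v : E) :
    ⟪H (v - u), v - u⟫ = ⟪H v, v⟫ + 2 * ⟪s, v⟫ - ⟪s, u⟫ := by
  have hvu : ⟪H v, u⟫ = -⟪s, v⟫ := by rw [hH v u, real_inner_comm, hu v]
  simp only [map_sub, inner_sub_left, inner_sub_right, hvu, hu v, hu u]
  ring

theorem sq_sub_two_mul_add_le_sq {t θ G R : ℝ} (hθ : 1 ≤ θ) (hG : 0 ≤ G)
    (ht : |t - (G + θ)| ≤ R) : t ^ 2 - 2 * t + θ ≤ (G + θ + R) ^ 2 := by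
  obtain ⟨ht_lo, ht_hi⟩ := abs_le.mp ht
  rcases le_or_gt 1 t with h1 | h1
  · calc t ^ 2 - 2 * t + θ = (t - 1) ^ 2 + (θ - 1) := by ring
      _ ≤ (G + θ + R - 1) ^ 2 + (2 * (G + θ + R) - 1) := by
        gcongr
        · linarith
        · linarith
      _ = (G + θ + R) ^ 2 := by ring
  · calc t ^ 2 - 2 * t + θ = (1 - t) ^ 2 + (θ - 1) := by ring
      _ ≤ R ^ 2 + (θ - 1) := by gcongr; linarith
      _ ≤ (G + θ + R) ^ 2 := by nlinarith

theorem stmt_17_general {E : Type*} [NormedAddCommGroup E] [InnerProductSpace ℝ E]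
    (H : E →ₗ[ℝ] E) (hHsymm : ∀ w₁ w₂ : E, ⟪H w₁, w₂⟫ = ⟪w₁, H w₂⟫)
    (s u v : E) (θ R gx gh G : ℝ)
    (ha : ∀ w : E, ⟪H u, w⟫ = -⟪s, w⟫)
    (hb : ⟪s, u⟫ = -θ)
    (hc : ⟪H v, v⟫ ≤ ⟪s, v⟫ ^ 2)
    (hd : 1 ≤ θ)
    (he : |gh - gx| ≤ R)
    (hG : G = ⟪s, u - v⟫ + gx - gh) (hG0 : 0 ≤ G) :
    ⟪H (v - u), v - u⟫ ≤ (G + θ + R) ^ 2 := by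
  have ht : |-⟪s, v⟫ - (G + θ)| ≤ R := by
    rw [hG, inner_sub_right, hb]
    convert he using 2
    ring
  calc ⟪H (v - u), v - u⟫ = ⟪H v, v⟫ + 2 * ⟪s, v⟫ + θ := by
        rw [LinearMap.IsSymmetric.inner_map_sub_sub_of_inner_map_eq_neg hHsymm ha, hb, sub_neg_eq_add]
    _ ≤ (-⟪s, v⟫) ^ 2 - 2 * -⟪s, v⟫ + θ := by rw [neg_sq]; linarith
    _ ≤ (G + θ + R) ^ 2 := sq_sub_two_mul_add_le_sq hd hG0 ht

/-- The bound `D_t ≤ G_tᵃ + θ + R_g` (squared): under the standard barrier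
identities for the Hessian `H` and gradient `s` of a 2-self-concordant
`θ`-logarithmically-homogeneous barrier, the squared Hessian distance
`⟨H(v-u), v-u⟩` is at most `(G + θ + R)²`. -/
theorem stmt_17 {E : Type*} [NormedAddCommGroup E] [InnerProductSpace ℝ E]
    (H : E →ₗ[ℝ] E) (hHsymm : ∀ w₁ w₂ : E, ⟪H w₁, w₂⟫ = ⟪w₁, H w₂⟫)
    (s u v : E) (θ R gx gh G : ℝ)
    (ha : ∀ w : E, ⟪H u, w⟫ = -⟪s, w⟫)
    (hb : ⟪s, u⟫ = -θ)
    (hc : ⟪H v, v⟫ ≤ ⟪s, v⟫ ^ 2)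
    (hd : 1 ≤ θ)
    (hR : 0 ≤ R) (he : |gh - gx| ≤ R)
    (hG : G = ⟪s, u - v⟫ + gx - gh) (hG0 : 0 ≤ G) :
    ⟪H (v - u), v - u⟫ ≤ (G + θ + R) ^ 2 :=
  stmt_17_general H hHsymm s u v θ R gx gh G ha hb hc hd he hG hG0
end
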